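/- arXiv:2404.17274 — 7 statements merged into one kernel-verified Lean document; each statement's English description precedes it below -/
import Mathlib

section
/- Let N, Δ ∈ ℕ, w : Fin N → ℝ, b ∈ ℝ, w̄ : Fin N → ℤ and b̄ ∈ ℤ. Suppose that for every integer vector x' : Fin (N+1) → ℤ with ∑_{i} |x' i| ≤ N·Δ + 1, the sign of ∑_{i<N} w i · x' i + b · x' N equals the sign of ∑_{i<N} (w̄ i : ℝ) · x' i + (b̄ : ℝ) · x' N. Then for every integer vector x : Fin N → ℤ with |x i| ≤ Δ for all i, one has ∑_i w i · (x i : ℝ) ≤ b if and only if ∑_i (w̄ i) · (x i) ≤ b̄ (an inequality of integers). -/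
/-!
Evaluate the augmented inequality at the integer point `(x, -1)`: its `ℓ¹`-norm is at most
`N·Δ + 1`, so the sign hypothesis applies, and `w·x - b ≤ 0` exactly when the sign of
`w·x - b` is nonpositive.
-/

theorem Real.sign_nonpos_iff {r : ℝ} : Real.sign r ≤ 0 ↔ r ≤ 0 := by
  rcases lt_trichotomy r 0 with hr | rfl | hr
  · simp [Real.sign_of_neg hr, hr.le]
  · simp [Real.sign_zero]
  · simp [Real.sign_of_pos hr, hr.not_ge]

theorem Real.nonpos_iff_nonpos_of_sign_eq {r s : ℝ} (h : Real.sign r = Real.sign s) :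
    r ≤ 0 ↔ s ≤ 0 := by
  rw [← Real.sign_nonpos_iff, h, Real.sign_nonpos_iff]

theorem Fin.sum_abs_snoc_le {N : ℕ} {x : Fin N → ℤ} {Δ : ℤ} (hx : ∀ i, |x i| ≤ Δ) (a : ℤ) :
    ∑ i, |(Fin.snoc x a : Fin (N + 1) → ℤ) i| ≤ N * Δ + |a| := by
  rw [Fin.sum_univ_castSucc]
  simp only [Fin.snoc_castSucc, Fin.snoc_last]
  gcongr
  simpa using Finset.sum_le_sum fun i (_ : i ∈ Finset.univ) => hx i

theorem frank_tardos_inequality_preservation (N Δ : ℕ) (w : Fin N → ℝ) (b : ℝ)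
    (wbar : Fin N → ℤ) (bbar : ℤ)
    (hsign : ∀ x' : Fin (N + 1) → ℤ,
      (∑ i, |x' i|) ≤ (N : ℤ) * (Δ : ℤ) + 1 →
      Real.sign ((∑ i : Fin N, w i * (x' i.castSucc : ℝ)) + b * (x' (Fin.last N) : ℝ)) =
        Real.sign ((∑ i : Fin N, (wbar i : ℝ) * (x' i.castSucc : ℝ)) +
          (bbar : ℝ) * (x' (Fin.last N) : ℝ)))
    (x : Fin N → ℤ) (hx : ∀ i, |x i| ≤ (Δ : ℤ)) :
    (∑ i, w i * (x i : ℝ)) ≤ b ↔ (∑ i, wbar i * x i) ≤ bbar := by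
  have hnorm := Fin.sum_abs_snoc_le hx (-1)
  rw [abs_neg, abs_one] at hnorm
  have h := Real.nonpos_iff_nonpos_of_sign_eq (hsign _ hnorm)
  simp only [Fin.snoc_castSucc, Fin.snoc_last, Int.cast_neg, Int.cast_one, mul_neg_one,
    ← sub_eq_add_neg, sub_nonpos] at h
  rw [h]
  exact_mod_cast Iff.rfl
end

section
/- Let d ∈ ℕ, let p : Fin d → ℕ satisfy p j' ≥ 1 for all j', fix j : Fin d, and let z : Fin d → ℕ satisfy ∑_{j'} z j' ≥ p j. Then there exists z' : Fin d → ℕ with z' ≠ 0 such that z' j' ≤ z j' for all j', ∑_{j'} p j' · z' j' = α · (p j) for some α ∈ ℕ, and ∑_{j'} z' j' ≤ p j. -/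
theorem exists_subvector_multiple (d : ℕ) (p : Fin d → ℕ) (hp : ∀ j', 1 ≤ p j') (j : Fin d)
    (z : Fin d → ℕ) (hz : p j ≤ ∑ j', z j') :
    ∃ z' : Fin d → ℕ, z' ≠ 0 ∧ (∀ j', z' j' ≤ z j') ∧
      (∃ α : ℕ, (∑ j', p j' * z' j') = α * p j) ∧ (∑ j', z' j') ≤ p j := by
  classical
  set N := ∑ j', z j' with hN
  have e : (Σ i, Fin (z i)) ≃ Fin N := Fintype.equivFinOfCardEq (by simp [hN])
  set F : ℕ → Fin d := fun n => if h : n < N then (e.symm ⟨n, h⟩).1 else j with hF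
  set W : ℕ → ℕ := fun k => ∑ i ∈ Finset.range k, p (F i) with hW
  -- pigeonhole on residues of prefix sums
  obtain ⟨a, ha, b, hb, hab, hWab⟩ :
      ∃ x ∈ Finset.range (p j + 1), ∃ y ∈ Finset.range (p j + 1),
        x ≠ y ∧ W x % p j = W y % p j := by
    apply Finset.exists_ne_map_eq_of_card_lt_of_maps_to (t := Finset.range (p j))
    · simp
    · intro k _
      exact Finset.mem_range.mpr (Nat.mod_lt _ (hp j))
  -- wlog a < b
  wlog hlt : a < b generalizing a b
  · exact this b hb a ha hab.symm hWab.symm (by omega)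
  have hbpj : b ≤ p j := by simpa [Nat.lt_succ_iff] using Finset.mem_range.mp hb
  have hbN : b ≤ N := hbpj.trans hz
  set z' : Fin d → ℕ :=
    fun j' => ((Finset.Ico a b).filter (fun i => F i = j')).card with hz'
  -- sum of z' equals b - a
  have hsum : (∑ j', z' j') = b - a := by
    rw [hz']
    rw [← Finset.card_eq_sum_card_fiberwise (t := Finset.univ) (fun x _ => Finset.mem_univ _)]
    simp [Nat.card_Ico]
  have hIcosub : Finset.Ico a b ⊆ Finset.range N := by
    intro x hx
    rw [Finset.mem_Ico] at hx
    exact Finset.mem_range.mpr (lt_of_lt_of_le hx.2 hbN)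
  refine ⟨z', ?_, ?_, ?_, ?_⟩
  · -- nonzero
    intro h0
    have : (∑ j', z' j') = 0 := by rw [h0]; simp
    omega
  · -- z' ≤ z
    intro j'
    rw [hz']
    have hmaps : ∀ n ∈ (Finset.Ico a b).filter (fun i => F i = j'),
        (fun m => if h : m < N then ((e.symm ⟨m, h⟩).2 : ℕ) else 0) n ∈ Finset.range (z j') := by
      intro n hn
      rw [Finset.mem_filter] at hn
      have hnN : n < N := Finset.mem_range.mp (hIcosub hn.1)
      have hfst : (e.symm ⟨n, hnN⟩).1 = j' := by
        have := hn.2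
        rw [hF] at this
        simpa [hnN] using this
      simp only [hnN, dif_pos]
      exact Finset.mem_range.mpr (hfst ▸ (e.symm ⟨n, hnN⟩).2.isLt)
    refine le_trans (Finset.card_le_card_of_injOn _ hmaps ?_) (by simp)
    intro n hn m hm hnm
    simp only [Finset.coe_filter, Set.mem_setOf_eq] at hn hm
    have hnN : n < N := Finset.mem_range.mp (hIcosub hn.1)
    have hmN : m < N := Finset.mem_range.mp (hIcosub hm.1)
    simp only [hnN, hmN, dif_pos] at hnm
    have hfn : (e.symm ⟨n, hnN⟩).1 = j' := by
      have := hn.2; rw [hF] at this; simpa [hnN] using this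
    have hfm : (e.symm ⟨m, hmN⟩).1 = j' := by
      have := hm.2; rw [hF] at this; simpa [hmN] using this
    have hsig : e.symm ⟨n, hnN⟩ = e.symm ⟨m, hmN⟩ := by
      apply Sigma.ext (hfn.trans hfm.symm)
      exact (Fin.heq_ext_iff (by rw [hfn, hfm])).mpr hnm
    simpa using congrArg Fin.val (e.symm.injective hsig)
  · -- divisibility
    have hsplit : W a + ∑ i ∈ Finset.Ico a b, p (F i) = W b := by
      rw [hW]
      simp only []
      rw [Finset.range_eq_Ico, Finset.range_eq_Ico]
      exact Finset.sum_Ico_consecutive _ (Nat.zero_le a) hlt.le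
    have hdvd : p j ∣ ∑ i ∈ Finset.Ico a b, p (F i) := by
      have hmod : W a ≡ W b [MOD p j] := hWab
      have h1 : p j ∣ W b - W a := (Nat.modEq_iff_dvd' (by omega)).mp hmod
      have h2 : W b - W a = ∑ i ∈ Finset.Ico a b, p (F i) := by omega
      rwa [h2] at h1
    have hfib : (∑ j', p j' * z' j') = ∑ i ∈ Finset.Ico a b, p (F i) := by
      rw [hz']
      rw [← Finset.sum_fiberwise_of_maps_to (t := Finset.univ) (g := F)
        (fun x _ => Finset.mem_univ _) (fun i => p (F i))]
      refine Finset.sum_congr rfl fun j' _ => ?_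
      rw [Finset.sum_congr rfl (fun i hi => by rw [(Finset.mem_filter.mp hi).2]),
        Finset.sum_const, smul_eq_mul, mul_comm]
    refine ⟨(∑ i ∈ Finset.Ico a b, p (F i)) / p j, ?_⟩
    rw [hfib, Nat.div_mul_cancel hdvd]
  · rw [hsum]; omega
end

section
/- For every high-multiplicity scheduling instance on identical machines there exists a schedule x* that minimizes Cmax (i.e., Cmax(x*) ≤ Cmax(x) for every schedule x) and has gap size at most pmax, i.e., x* i₁ j ≤ x* i₂ j + pmax for all machines i₁, i₂ and all job types j. -/
/-- A schedule assigns `x i j` jobs of type `j` to machine `i`, placing all `n j` jobs. -/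
def IsSchedule {m d : ℕ} (n : Fin d → ℕ) (x : Fin m → Fin d → ℕ) : Prop :=
  ∀ j, ∑ i, x i j = n j

/-- The load of machine `i` under schedule `x`. -/
def load {m d : ℕ} (p : Fin d → ℕ) (x : Fin m → Fin d → ℕ) (i : Fin m) : ℕ :=
  ∑ j, x i j * p j

/-- The makespan: the maximum machine load. -/
def Cmax {m d : ℕ} (p : Fin d → ℕ) (x : Fin m → Fin d → ℕ) : ℕ :=
  Finset.univ.sup (load p x)

/-- The minimum machine load. -/
noncomputable def Cmin {m d : ℕ} (p : Fin d → ℕ) (x : Fin m → Fin d → ℕ) : ℕ :=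
  sInf (Set.range (load p x))

/-- The envy value: maximum load minus minimum load. -/
noncomputable def Cenvy {m d : ℕ} (p : Fin d → ℕ) (x : Fin m → Fin d → ℕ) : ℕ :=
  Cmax p x - Cmin p x

/-!
Among the makespan-optimal schedules take one minimising `∑ i j, x i j ^ 2`. If
`x i₁ j₀ > x i₂ j₀ + pmax`, then either one job of type `j₀` moves from `i₁` to `i₂` without
raising the makespan, or `load i₁ < load i₂ + p j₀`. In the latter case the jobs that `i₂` holds in
excess of `i₁` have total processing time above `pmax * p j₀`, so a pigeonhole argument on prefix
sums extracts some of them with total time `s * p j₀`, `1 ≤ s ≤ pmax`; swapping them against `s`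
jobs of type `j₀` keeps both loads. Each exchange moves jobs from a larger to a smaller count of
the same type, so it strictly decreases the sum of squares.
-/

theorem Nat.sq_tsub_add_sq_add_le {a b k : ℕ} (h : k ≤ a - b) :
    (a - k) ^ 2 + (b + k) ^ 2 ≤ a ^ 2 + b ^ 2 := by
  rcases Nat.eq_zero_or_pos k with rfl | hk
  · simp
  obtain ⟨r, rfl⟩ : ∃ r, a = b + k + r := ⟨a - b - k, by omega⟩
  rw [show b + k + r - k = b + r by omega]
  nlinarith [Nat.zero_le (k * r)]

theorem Nat.sq_tsub_add_sq_add_lt {a b k : ℕ} (hk : 0 < k) (h : b + k < a) :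
    (a - k) ^ 2 + (b + k) ^ 2 < a ^ 2 + b ^ 2 := by
  obtain ⟨r, rfl⟩ : ∃ r, a = b + k + r + 1 := ⟨a - b - k - 1, by omega⟩
  rw [show b + k + r + 1 - k = b + r + 1 by omega]
  nlinarith

theorem Nat.exists_lt_le_modEq (f : ℕ → ℕ) {q : ℕ} (hq : 0 < q) :
    ∃ k k', k < k' ∧ k' ≤ q ∧ f k ≡ f k' [MOD q] := by
  obtain ⟨k, hk, k', hk', hne, heq⟩ := Finset.exists_ne_map_eq_of_card_lt_of_maps_to
    (s := Finset.range (q + 1)) (t := Finset.range q) (f := (f · % q)) (by simp)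
    (fun k _ ↦ Finset.mem_range.2 (Nat.mod_lt _ hq))
  simp only [Finset.mem_range] at hk hk'
  rcases hne.lt_or_gt with h | h
  · exact ⟨k, k', h, by omega, heq⟩
  · exact ⟨k', k, h, by omega, heq.symm⟩

theorem List.exists_sublist_sum_map_eq_mul {α : Type*} (w : α → ℕ) {P q : ℕ} (l : List α)
    (hw : ∀ a ∈ l, 1 ≤ w a ∧ w a ≤ P) (hq : 0 < q) (hl : q * P < (l.map w).sum) :
    ∃ l' : List α, l'.Sublist l ∧ ∃ s, 1 ≤ s ∧ s ≤ P ∧ (l'.map w).sum = s * q := by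
  have hlen : q < l.length := by
    have : (l.map w).sum ≤ l.length * P := by
      simpa using List.sum_le_card_nsmul (l.map w) P (by simpa using fun a ha ↦ (hw a ha).2)
    by_contra! h
    nlinarith
  obtain ⟨k, k', hkk', hk'q, hmod⟩ := Nat.exists_lt_le_modEq (fun k ↦ ((l.take k).map w).sum) hq
  set seg := (l.take k').drop k
  have hseg_sub : seg.Sublist l := (List.drop_sublist _ _).trans (List.take_sublist _ _)
  have hseg_len : seg.length = k' - k := by
    simp only [seg, List.length_drop, List.length_take]
    omega
  have hsplit : ((l.take k).map w).sum + (seg.map w).sum = ((l.take k').map w).sum := by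
    rw [← List.sum_append, ← List.map_append, ← List.take_append_drop k (l.take k'),
      List.take_take, min_eq_left hkk'.le]
  obtain ⟨s, hs⟩ : q ∣ (seg.map w).sum := by
    refine Nat.modEq_zero_iff_dvd.1 (Nat.ModEq.add_left_cancel' ((l.take k).map w).sum ?_)
    rw [hsplit, add_zero]
    exact hmod.symm
  have hseg_w : ∀ a ∈ seg.map w, 1 ≤ a ∧ a ≤ P := by
    simpa using fun a ha ↦ hw a (hseg_sub.subset ha)
  have hlow : seg.length ≤ (seg.map w).sum := by
    simpa using List.card_nsmul_le_sum (seg.map w) 1 (fun a ha ↦ (hseg_w a ha).1)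
  have hup : (seg.map w).sum ≤ seg.length * P := by
    simpa using List.sum_le_card_nsmul (seg.map w) P (fun a ha ↦ (hseg_w a ha).2)
  refine ⟨seg, hseg_sub, s, Nat.pos_of_ne_zero ?_, ?_, by rw [hs, mul_comm]⟩
  · rintro rfl
    omega
  · refine Nat.le_of_mul_le_mul_left ?_ hq
    rw [← hs]
    exact hup.trans (Nat.mul_le_mul_right P (by omega))

theorem Multiset.exists_le_sum_map_eq_mul {α : Type*} (w : α → ℕ) {P q : ℕ} (M : Multiset α)
    (hw : ∀ a ∈ M, 1 ≤ w a ∧ w a ≤ P) (hq : 0 < q) (hM : q * P < (M.map w).sum) :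
    ∃ N ≤ M, ∃ s, 1 ≤ s ∧ s ≤ P ∧ (N.map w).sum = s * q := by
  induction M using Quotient.inductionOn with
  | h l =>
    obtain ⟨l', hl', hs⟩ := l.exists_sublist_sum_map_eq_mul w hw hq hM
    exact ⟨l', Multiset.coe_le.2 hl'.subperm, hs⟩

theorem Multiset.sum_map_eq_sum_count_mul {α : Type*} [Fintype α] [DecidableEq α] (s : Multiset α)
    (w : α → ℕ) : (s.map w).sum = ∑ a, s.count a * w a := by
  simp only [Finset.sum_multiset_map_count, smul_eq_mul]
  refine Finset.sum_subset (Finset.subset_univ _) fun a _ ha ↦ ?_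
  rw [Multiset.count_eq_zero.2 (by simpa using ha), zero_mul]

theorem exists_le_dotProduct_eq_mul {ι : Type*} [Fintype ι] [DecidableEq ι] {w c : ι → ℕ}
    {P q : ℕ} (hw : ∀ a, 1 ≤ w a ∧ w a ≤ P) (hq : 0 < q) (hc : q * P < c ⬝ᵥ w) :
    ∃ t ≤ c, ∃ s, 1 ≤ s ∧ s ≤ P ∧ t ⬝ᵥ w = s * q := by
  set M := Multiset.toFinsupp.symm (Finsupp.equivFunOnFinite.symm c)
  have hM : ∀ a, M.count a = c a := fun a ↦ by
    rw [← Multiset.toFinsupp_apply, AddEquiv.apply_symm_apply,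
      Finsupp.equivFunOnFinite_symm_apply_apply]
  have hsum : ∀ N : Multiset ι, (N.map w).sum = (N.count ·) ⬝ᵥ w := fun N ↦
    Multiset.sum_map_eq_sum_count_mul N w
  obtain ⟨N, hNM, s, hs⟩ := M.exists_le_sum_map_eq_mul w (fun a _ ↦ hw a) hq
    (by rwa [hsum, funext hM])
  refine ⟨(N.count ·), fun a ↦ ?_, s, hs.1, hs.2.1, by rw [← hsum, hs.2.2]⟩
  rw [← hM a]
  exact Multiset.count_le_of_le a hNM

theorem Fintype.sum_update_update_add {ι M : Type*} [Fintype ι] [DecidableEq ι]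
    [AddCommMonoid M] (f : ι → M) {i₁ i₂ : ι} (h : i₁ ≠ i₂) (a b : M) :
    ∑ i, Function.update (Function.update f i₁ a) i₂ b i + (f i₁ + f i₂) =
      ∑ i, f i + (a + b) := by
  have h₁ : i₁ ∈ Finset.univ \ {i₂} := by simpa using h
  rw [Finset.sum_update_of_mem (Finset.mem_univ _), Finset.sum_update_of_mem h₁,
    Finset.sum_eq_add_sum_sdiff_singleton_of_mem (Finset.mem_univ i₂) f,
    Finset.sum_eq_add_sum_sdiff_singleton_of_mem h₁ f]
  abel

section Schedules

variable {m d : ℕ}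

theorem isSchedule_single (i₀ : Fin m) (n : Fin d → ℕ) : IsSchedule n (Pi.single i₀ n) := by
  intro j
  rw [← Finset.sum_apply, Finset.sum_pi_single', if_pos (Finset.mem_univ _)]

theorem load_le_Cmax (p : Fin d → ℕ) (x : Fin m → Fin d → ℕ) (i : Fin m) :
    load p x i ≤ Cmax p x :=
  Finset.le_sup (Finset.mem_univ i)

def sumSq (x : Fin m → Fin d → ℕ) : ℕ := ∑ i, ∑ j, x i j ^ 2

def exchange (x : Fin m → Fin d → ℕ) (i₁ i₂ : Fin m) (u v : Fin d → ℕ) : Fin m → Fin d → ℕ :=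
  Function.update (Function.update x i₁ (x i₁ - u + v)) i₂ (x i₂ - v + u)

variable {x : Fin m → Fin d → ℕ} {i₁ i₂ : Fin m} {u v : Fin d → ℕ}

theorem exchange_apply_left (h : i₁ ≠ i₂) : exchange x i₁ i₂ u v i₁ = x i₁ - u + v := by
  simp [exchange, h]

theorem exchange_apply_right : exchange x i₁ i₂ u v i₂ = x i₂ - v + u := by
  simp [exchange]

theorem exchange_apply_of_ne {i : Fin m} (h₁ : i ≠ i₁) (h₂ : i ≠ i₂) :
    exchange x i₁ i₂ u v i = x i := by
  simp [exchange, h₁, h₂]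

theorem sum_comp_exchange_add {M : Type*} [AddCommMonoid M] (g : (Fin d → ℕ) → M)
    (h : i₁ ≠ i₂) :
    ∑ i, g (exchange x i₁ i₂ u v i) + (g (x i₁) + g (x i₂)) =
      ∑ i, g (x i) + (g (x i₁ - u + v) + g (x i₂ - v + u)) := by
  simp only [exchange, ← Function.comp_apply (f := g), Function.comp_update]
  exact Fintype.sum_update_update_add _ h _ _

theorem IsSchedule.exchange {n : Fin d → ℕ} (hx : IsSchedule n x) (h : i₁ ≠ i₂)
    (hu : u ≤ x i₁) (hv : v ≤ x i₂) : IsSchedule n (exchange x i₁ i₂ u v) := by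
  intro j
  have hsum := sum_comp_exchange_add (x := x) (u := u) (v := v) (· j) h
  simp only [Pi.add_apply, Pi.sub_apply] at hsum
  have huj : u j ≤ x i₁ j := hu j
  have hvj : v j ≤ x i₂ j := hv j
  rw [← hx j]
  omega

theorem load_exchange_left (p : Fin d → ℕ) (h : i₁ ≠ i₂) (hu : u ≤ x i₁) :
    load p (exchange x i₁ i₂ u v) i₁ + u ⬝ᵥ p = load p x i₁ + v ⬝ᵥ p := by
  change exchange x i₁ i₂ u v i₁ ⬝ᵥ p + u ⬝ᵥ p = x i₁ ⬝ᵥ p + v ⬝ᵥ p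
  rw [exchange_apply_left h, ← add_dotProduct, add_right_comm, tsub_add_cancel_of_le hu,
    add_dotProduct]

theorem load_exchange_right (p : Fin d → ℕ) (hv : v ≤ x i₂) :
    load p (exchange x i₁ i₂ u v) i₂ + v ⬝ᵥ p = load p x i₂ + u ⬝ᵥ p := by
  change exchange x i₁ i₂ u v i₂ ⬝ᵥ p + v ⬝ᵥ p = x i₂ ⬝ᵥ p + u ⬝ᵥ p
  rw [exchange_apply_right, ← add_dotProduct, add_right_comm, tsub_add_cancel_of_le hv,
    add_dotProduct]

theorem Cmax_exchange_le (p : Fin d → ℕ) (h₁ : load p (exchange x i₁ i₂ u v) i₁ ≤ Cmax p x)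
    (h₂ : load p (exchange x i₁ i₂ u v) i₂ ≤ Cmax p x) :
    Cmax p (exchange x i₁ i₂ u v) ≤ Cmax p x := by
  refine Finset.sup_le fun i _ ↦ ?_
  by_cases hi₁ : i = i₁
  · exact hi₁ ▸ h₁
  by_cases hi₂ : i = i₂
  · exact hi₂ ▸ h₂
  change exchange x i₁ i₂ u v i ⬝ᵥ p ≤ _
  rw [exchange_apply_of_ne hi₁ hi₂]
  exact load_le_Cmax p x i

theorem sumSq_exchange_lt (h : i₁ ≠ i₂) {j₀ : Fin d} {s : ℕ} {t : Fin d → ℕ} (hs : 0 < s)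
    (hgap : x i₂ j₀ + s < x i₁ j₀) (ht : t ≤ x i₂ - x i₁) :
    sumSq (exchange x i₁ i₂ (Pi.single j₀ s) t) < sumSq x := by
  have key := sum_comp_exchange_add (x := x) (u := Pi.single j₀ s) (v := t)
    (fun r ↦ ∑ j, r j ^ 2) h
  have ht₀ : t j₀ = 0 := by
    have := ht j₀
    simp only [Pi.sub_apply] at this
    omega
  have hj₀ : (x i₁ j₀ - s + t j₀) ^ 2 + (x i₂ j₀ - t j₀ + s) ^ 2 <
      x i₁ j₀ ^ 2 + x i₂ j₀ ^ 2 := by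
    rw [ht₀, add_zero, Nat.sub_zero]
    exact Nat.sq_tsub_add_sq_add_lt hs hgap
  suffices hlt : ∑ j, ((x i₁ - Pi.single j₀ s + t : Fin d → ℕ) j ^ 2 +
      (x i₂ - t + Pi.single j₀ s : Fin d → ℕ) j ^ 2) < ∑ j, (x i₁ j ^ 2 + x i₂ j ^ 2) by
    simp only [Finset.sum_add_distrib] at hlt
    unfold sumSq
    omega
  refine Finset.sum_lt_sum (fun j _ ↦ ?_) ⟨j₀, Finset.mem_univ _, by simpa using hj₀⟩
  by_cases hj : j = j₀
  · subst hj
    simpa using hj₀.le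
  · simpa [hj, add_comm] using Nat.sq_tsub_add_sq_add_le (ht j)

/- `h₁` and `h₂` say that swapping `s` jobs of type `j₀` on `i₁` against the jobs `t` on `i₂`
keeps the loads of `i₁` and `i₂` within the makespan. -/
theorem exists_Cmax_le_sumSq_lt_of_exchange {p n : Fin d → ℕ} (hx : IsSchedule n x)
    (hne : i₁ ≠ i₂) {j₀ : Fin d} {s : ℕ} {t : Fin d → ℕ} (hs : 0 < s)
    (hgap : x i₂ j₀ + s < x i₁ j₀) (ht : t ≤ x i₂ - x i₁)
    (h₁ : load p x i₁ + t ⬝ᵥ p ≤ Cmax p x + s * p j₀)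
    (h₂ : load p x i₂ + s * p j₀ ≤ Cmax p x + t ⬝ᵥ p) :
    ∃ x' : Fin m → Fin d → ℕ, IsSchedule n x' ∧ Cmax p x' ≤ Cmax p x ∧ sumSq x' < sumSq x := by
  have hu : Pi.single j₀ s ≤ x i₁ := fun j ↦ by
    by_cases hj : j = j₀
    · subst hj
      simp only [Pi.single_eq_same]
      omega
    · simp [hj]
  have hv : t ≤ x i₂ := ht.trans tsub_le_self
  have hl₁ := load_exchange_left p hne hu (v := t)
  have hl₂ := load_exchange_right p hv (i₁ := i₁) (u := Pi.single j₀ s)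
  rw [single_dotProduct] at hl₁ hl₂
  exact ⟨_, hx.exchange hne hu hv, Cmax_exchange_le p (by omega) (by omega),
    sumSq_exchange_lt hne hs hgap ht⟩

theorem exists_Cmax_le_sumSq_lt_of_gap {p n : Fin d → ℕ} (hp : ∀ j, 1 ≤ p j)
    (hx : IsSchedule n x) {j₀ : Fin d} (hgap : x i₂ j₀ + Finset.univ.sup p < x i₁ j₀) :
    ∃ x' : Fin m → Fin d → ℕ, IsSchedule n x' ∧ Cmax p x' ≤ Cmax p x ∧ sumSq x' < sumSq x := by
  set P := Finset.univ.sup p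
  have hpP : ∀ j, p j ≤ P := fun j ↦ Finset.le_sup (Finset.mem_univ j)
  have hne : i₁ ≠ i₂ := by
    rintro rfl
    omega
  have hC₁ := load_le_Cmax p x i₁
  have hC₂ := load_le_Cmax p x i₂
  have := hp j₀
  have := hpP j₀
  by_cases hmove : load p x i₂ + p j₀ ≤ load p x i₁
  · exact exists_Cmax_le_sumSq_lt_of_exchange (j₀ := j₀) (t := 0) hx hne one_pos (by omega)
      (fun _ ↦ Nat.zero_le _) (by simp only [zero_dotProduct, add_zero, one_mul]; omega)
      (by simp only [zero_dotProduct, add_zero, one_mul]; omega)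
  have hc : p j₀ * P < (x i₂ - x i₁) ⬝ᵥ p := by
    have hle : x i₂ + Pi.single j₀ (P + 1) ≤ x i₁ + (x i₂ - x i₁) := fun j ↦ by
      by_cases hj : j = j₀
      · subst hj
        simp only [Pi.add_apply, Pi.sub_apply, Pi.single_eq_same]
        omega
      · simp only [Pi.add_apply, Pi.sub_apply, Pi.single_apply, hj, if_false]
        omega
    have := dotProduct_le_dotProduct_of_nonneg_right (w := p) hle (fun _ ↦ Nat.zero_le _)
    rw [add_dotProduct, add_dotProduct, single_dotProduct] at this
    change load p x i₂ + _ ≤ load p x i₁ + _ at this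
    nlinarith
  obtain ⟨t, ht, s, hs₁, hsP, hts⟩ :=
    exists_le_dotProduct_eq_mul (fun j ↦ ⟨hp j, hpP j⟩) (hp j₀) hc
  exact exists_Cmax_le_sumSq_lt_of_exchange (j₀ := j₀) hx hne hs₁ (by omega) ht (by omega)
    (by omega)

end Schedules

theorem exists_Cmax_minimizer_small_gap_general (d m : ℕ) (hm : 1 ≤ m)
    (p : Fin d → ℕ) (hp : ∀ j, 1 ≤ p j) (n : Fin d → ℕ) :
    ∃ xstar : Fin m → Fin d → ℕ, IsSchedule n xstar ∧
      (∀ x : Fin m → Fin d → ℕ, IsSchedule n x → Cmax p xstar ≤ Cmax p x) ∧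
      ∀ (i₁ i₂ : Fin m) (j : Fin d), xstar i₁ j ≤ xstar i₂ j + Finset.univ.sup p := by
  set schedules := {x : Fin m → Fin d → ℕ | IsSchedule n x}
  have hschedules : schedules.Nonempty := ⟨_, isSchedule_single ⟨0, hm⟩ n⟩
  set optimal := {x ∈ schedules | ∀ y ∈ schedules, Cmax p x ≤ Cmax p y}
  have hoptimal : optimal.Nonempty :=
    ⟨_, Function.argminOn_mem (Cmax p) schedules hschedules,
      fun y hy ↦ Function.argminOn_le (Cmax p) schedules hy⟩
  obtain ⟨hsched, hopt⟩ := Function.argminOn_mem sumSq optimal hoptimal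
  refine ⟨_, hsched, hopt, fun i₁ i₂ j ↦ ?_⟩
  by_contra! hgap
  obtain ⟨x', hx', hC, hlt⟩ := exists_Cmax_le_sumSq_lt_of_gap hp hsched hgap
  exact Function.not_lt_argminOn sumSq optimal ⟨hx', fun y hy ↦ hC.trans (hopt y hy)⟩ hlt

theorem exists_Cmax_minimizer_small_gap (d m : ℕ) (hd : 1 ≤ d) (hm : 1 ≤ m)
    (p : Fin d → ℕ) (hp : ∀ j, 1 ≤ p j) (n : Fin d → ℕ) :
    ∃ xstar : Fin m → Fin d → ℕ, IsSchedule n xstar ∧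
      (∀ x : Fin m → Fin d → ℕ, IsSchedule n x → Cmax p xstar ≤ Cmax p x) ∧
      ∀ (i₁ i₂ : Fin m) (j : Fin d), xstar i₁ j ≤ xstar i₂ j + Finset.univ.sup p :=
  exists_Cmax_minimizer_small_gap_general d m hm p hp n
end

section
/- For every high-multiplicity scheduling instance on identical machines the following three claims hold: there exists a schedule x* minimizing Cmax such that n j ≤ m·(x* i j) + m·pmax and m·(x* i j) ≤ n j + m·pmax for all machines i and job types j; there exists a schedule x* maximizing Cmin with the same property; and there exists a schedule x* minimizing Cenvy with the same property. (Equivalently, in each case every entry x* i j differs from the fractional equal-split value n j / m by at most pmax.) -/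
section ListAux

variable {d : ℕ} (p : Fin d → ℕ)

lemma lsum_eq_sum_count : ∀ l : List (Fin d), (l.map p).sum = ∑ j, l.count j * p j := by
  intro l
  induction l with
  | nil => simp
  | cons h t ih =>
    simp only [List.map_cons, List.sum_cons, ih, List.count_cons]
    have : ∀ j : Fin d, (t.count j + if h == j then 1 else 0) * p j
        = t.count j * p j + (if h = j then p j else 0) := by
      intro j
      by_cases hj : h = j
      · subst hj; simp [add_mul]
      · rw [if_neg (by simp [hj]), if_neg hj]; simp
    rw [Finset.sum_congr rfl (fun j _ => this j), Finset.sum_add_distrib,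
      Finset.sum_ite_eq Finset.univ h p]
    simp [add_comm]

lemma llen_le_lsum (hp : ∀ j, 1 ≤ p j) : ∀ l : List (Fin d), l.length ≤ (l.map p).sum := by
  intro l
  induction l with
  | nil => simp
  | cons h t ih => simp only [List.map_cons, List.sum_cons, List.length_cons]
                   have := hp h; omega

lemma lsum_le_len_mul {pmax : ℕ} (hpmax : ∀ j, p j ≤ pmax) :
    ∀ l : List (Fin d), (l.map p).sum ≤ l.length * pmax := by
  intro l
  induction l with
  | nil => simp
  | cons h t ih => simp only [List.map_cons, List.sum_cons, List.length_cons]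
                   have := hpmax h
                   have : (t.length + 1) * pmax = t.length * pmax + pmax := by ring
                   omega

lemma count_pool (w : Fin d → ℕ) (j : Fin d) (l : List (Fin d)) :
    (l.flatMap (fun u => List.replicate (w u) u)).count j
      = (l.map (fun u => if j = u then w u else 0)).sum := by
  induction l with
  | nil => simp
  | cons h t ih =>
    simp only [List.flatMap_cons, List.count_append, ih, List.count_replicate,
      List.map_cons, List.sum_cons]
    congr 1
    by_cases hj : j = h
    · subst hj; simp
    · rw [if_neg (by simp [Ne.symm hj]), if_neg hj]

lemma len_pool (w : Fin d → ℕ) (l : List (Fin d)) :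
    (l.flatMap (fun u => List.replicate (w u) u)).length = (l.map w).sum := by
  induction l with
  | nil => simp
  | cons h t ih => simp [ih]

end ListAux

lemma block_lemma {d : ℕ} (p : Fin d → ℕ) (hp : ∀ j, 1 ≤ p j) {pmax : ℕ}
    (hpmax : ∀ j, p j ≤ pmax) {pj : ℕ} (hpj : 1 ≤ pj) (w : Fin d → ℕ)
    (hw : pmax * pj + 1 ≤ ∑ j', w j' * p j') :
    ∃ c : Fin d → ℕ, (∀ j', c j' ≤ w j') ∧ pj ∣ (∑ j', c j' * p j') ∧
      1 ≤ ∑ j', c j' * p j' ∧ ∑ j', c j' * p j' ≤ pmax * pj := by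
  classical
  set L : List (Fin d) := (List.finRange d).flatMap (fun u => List.replicate (w u) u) with hL
  have hcount : ∀ j', L.count j' = w j' := by
    intro j'
    rw [hL, count_pool, ← Fin.sum_univ_def]
    simp
  have hlen : L.length = ∑ j', w j' := by
    rw [hL, len_pool, ← Fin.sum_univ_def]
  have hLsum : (L.map p).sum = ∑ j', w j' * p j' := by
    rw [lsum_eq_sum_count]
    exact Finset.sum_congr rfl (fun j' _ => by rw [hcount])
  have hpmax1 : 1 ≤ pmax := by
    rcases Nat.eq_zero_or_pos d with hd | hd
    · subst hd; simp at hw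
    · exact le_trans (hp ⟨0, hd⟩) (hpmax ⟨0, hd⟩)
  -- length ≥ pj + 1
  have hlen_ge : pj + 1 ≤ L.length := by
    have h1 : (L.map p).sum ≤ L.length * pmax := lsum_le_len_mul p hpmax L
    by_contra hcon
    push_neg at hcon
    have : L.length * pmax ≤ pj * pmax := Nat.mul_le_mul_right _ (by omega)
    rw [hLsum] at h1
    nlinarith
  -- pigeonhole on prefix sums mod pj
  have hcard : Fintype.card (Fin pj) < Fintype.card (Fin (pj + 1)) := by simp
  obtain ⟨t1, t2, hne, heq⟩ := Fintype.exists_ne_map_eq_of_card_lt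
    (fun t : Fin (pj + 1) => (⟨((L.take (t : ℕ)).map p).sum % pj, Nat.mod_lt _ hpj⟩ : Fin pj))
    hcard
  -- wlog t1 < t2
  wlog hlt : (t1 : ℕ) < (t2 : ℕ) generalizing t1 t2
  · have hne' : (t1 : ℕ) ≠ (t2 : ℕ) := fun h => hne (Fin.ext h)
    exact this t2 t1 hne.symm heq.symm (by omega)
  -- segment between t1 and t2
  set seg : List (Fin d) := (L.drop (t1 : ℕ)).take ((t2 : ℕ) - (t1 : ℕ)) with hseg
  have htake : L.take (t2 : ℕ) = L.take (t1 : ℕ) ++ seg := by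
    rw [hseg, ← List.take_add]
    congr 1
    omega
  have hsegsum : ((L.take (t2 : ℕ)).map p).sum
      = ((L.take (t1 : ℕ)).map p).sum + ((seg.map p)).sum := by
    rw [htake, List.map_append, List.sum_append]
  have hseglen : seg.length = (t2 : ℕ) - (t1 : ℕ) := by
    rw [hseg, List.length_take, List.length_drop]
    have h2 : (t2 : ℕ) ≤ pj := by omega
    omega
  refine ⟨fun j' => seg.count j', ?_, ?_, ?_, ?_⟩
  · intro j'
    rw [← hcount j']
    exact List.Sublist.count_le j'
      ((List.take_sublist _ _).trans (List.drop_sublist _ _))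
  · have hdvd : pj ∣ ((seg.map p).sum) := by
      have hmod : ((L.take (t1 : ℕ)).map p).sum % pj = ((L.take (t2 : ℕ)).map p).sum % pj := by
        have := congrArg Fin.val heq
        simpa using this
      have : ((L.take (t1 : ℕ)).map p).sum ≡ ((L.take (t1 : ℕ)).map p).sum + (seg.map p).sum [MOD pj] := by
        rw [← hsegsum]; exact hmod
      have h2 := (Nat.modEq_iff_dvd' (Nat.le_add_right _ _)).mp this
      simpa using h2
    rw [← lsum_eq_sum_count]
    exact hdvd
  · rw [← lsum_eq_sum_count]
    have := llen_le_lsum p hp seg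
    omega
  · rw [← lsum_eq_sum_count]
    have h1 := lsum_le_len_mul p hpmax seg
    have h2 : seg.length * pmax ≤ pj * pmax := Nat.mul_le_mul_right _ (by omega)
    calc (seg.map p).sum ≤ seg.length * pmax := h1
      _ ≤ pj * pmax := h2
      _ = pmax * pj := Nat.mul_comm _ _

/-- The potential function. -/
def Phi {m d : ℕ} (p n : Fin d → ℕ) (x : Fin m → Fin d → ℕ) : ℕ :=
  (∑ i, (load p x i)^2) * ((∑ j, (n j)^2) + 1) + ∑ i, ∑ j, (x i j)^2

lemma Phi2_le {m d : ℕ} (n : Fin d → ℕ) (x : Fin m → Fin d → ℕ) (hx : IsSchedule n x) :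
    ∑ i, ∑ j, (x i j)^2 ≤ ∑ j, (n j)^2 := by
  rw [Finset.sum_comm]
  apply Finset.sum_le_sum
  intro j _
  have hbound : ∀ i : Fin m, x i j ≤ n j := by
    intro i
    rw [← hx j]
    exact Finset.single_le_sum (f := fun i => x i j) (fun _ _ => Nat.zero_le _) (Finset.mem_univ i)
  calc ∑ i, (x i j)^2 ≤ ∑ i, x i j * n j := by
        apply Finset.sum_le_sum
        intro i _
        rw [pow_two]
        exact Nat.mul_le_mul_left _ (hbound i)
    _ = (∑ i, x i j) * n j := (Finset.sum_mul _ _ _).symm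
    _ = (n j)^2 := by rw [hx j, pow_two]

lemma sum_sub2 {m : ℕ} (f g : Fin m → ℕ) {a b : Fin m} (hab : a ≠ b)
    (hfg : ∀ i, i ≠ a → i ≠ b → f i = g i) :
    (∑ i, f i) + g a + g b = (∑ i, g i) + f a + f b := by
  classical
  have hmem : a ∈ Finset.univ.erase b := Finset.mem_erase.mpr ⟨hab, Finset.mem_univ a⟩
  have key : ∀ h : Fin m → ℕ,
      ∑ i, h i = (∑ i ∈ (Finset.univ.erase b).erase a, h i) + h a + h b := by
    intro h
    rw [Finset.sum_erase_add _ _ hmem, Finset.sum_erase_add _ _ (Finset.mem_univ b)]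
  have hcong : ∑ i ∈ (Finset.univ.erase b).erase a, f i
      = ∑ i ∈ (Finset.univ.erase b).erase a, g i := by
    apply Finset.sum_congr rfl
    intro i hi
    have h1 := Finset.mem_erase.mp hi
    have h2 := Finset.mem_erase.mp h1.2
    exact hfg i h1.1 h2.1
  rw [key f, key g, hcong]
  ring

section TwoMachine
variable {m d : ℕ} (p n : Fin d → ℕ) (x : Fin m → Fin d → ℕ) {a b : Fin m}
  (hab : a ≠ b) (va vb : Fin d → ℕ)

/-- replace machines a and b -/
def repl (a b : Fin m) : Fin m → Fin d → ℕ := fun i => if i = a then va else if i = b then vb else x i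

lemma repl_a : repl x va vb a b a = va := by simp [repl]
lemma repl_b (hab : a ≠ b) : repl x va vb a b b = vb := by
  have hba : ¬ (b = a) := fun h => hab h.symm
  simp [repl, hba]
lemma repl_o (i : Fin m) (hia : i ≠ a) (hib : i ≠ b) : repl x va vb a b i = x i := by
  simp [repl, hia, hib]

lemma repl_load_a : load p (repl x va vb a b) a = ∑ j', va j' * p j' := by
  simp only [load, repl_a]
lemma repl_load_b (hab : a ≠ b) : load p (repl x va vb a b) b = ∑ j', vb j' * p j' := by
  simp only [load, repl_b x va vb hab]
lemma repl_load_o (i : Fin m) (hia : i ≠ a) (hib : i ≠ b) :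
    load p (repl x va vb a b) i = load p x i := by
  simp only [load, repl_o x va vb i hia hib]

lemma repl_sched (hab : a ≠ b) (hx : IsSchedule n x)
    (hsum : ∀ j₀, va j₀ + vb j₀ = x a j₀ + x b j₀) : IsSchedule n (repl x va vb a b) := by
  intro j₀
  have h := sum_sub2 (fun i => repl x va vb a b i j₀) (fun i => x i j₀) hab
    (fun i hia hib => by simp only [repl_o x va vb i hia hib])
  simp only [repl_a, repl_b x va vb hab] at h
  rw [hx j₀] at h
  have := hsum j₀
  omega

lemma repl_phi1 (hab : a ≠ b) :
    (∑ i, (load p (repl x va vb a b) i)^2) + (load p x a)^2 + (load p x b)^2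
      = (∑ i, (load p x i)^2) + (∑ j', va j' * p j')^2 + (∑ j', vb j' * p j')^2 := by
  have h := sum_sub2 (fun i => (load p (repl x va vb a b) i)^2) (fun i => (load p x i)^2) hab
    (fun i hia hib => by simp only [repl_load_o p x va vb i hia hib])
  simp only [repl_load_a, repl_load_b p x va vb hab] at h
  exact h

lemma repl_phi2 (hab : a ≠ b) :
    (∑ i, ∑ j', (repl x va vb a b i j')^2) + (∑ j', (x a j')^2) + (∑ j', (x b j')^2)
      = (∑ i, ∑ j', (x i j')^2) + (∑ j', (va j')^2) + (∑ j', (vb j')^2) := by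
  have h := sum_sub2 (fun i => ∑ j', (repl x va vb a b i j')^2) (fun i => ∑ j', (x i j')^2) hab
    (fun i hia hib => by simp only [repl_o x va vb i hia hib])
  simp only [repl_a, repl_b x va vb hab] at h
  exact h

end TwoMachine

lemma potlem {F1' F1 P2' Bd P2 : ℕ} (h1 : F1' + 1 ≤ F1) (h2 : P2' ≤ Bd) :
    F1' * (Bd + 1) + P2' < F1 * (Bd + 1) + P2 := by
  have h3 : (F1' + 1) * (Bd + 1) ≤ F1 * (Bd + 1) := Nat.mul_le_mul_right _ h1
  have h4 : (F1' + 1) * (Bd + 1) = F1' * (Bd + 1) + Bd + 1 := by ring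
  omega

lemma sqlem1 {A B V q : ℕ} (hq : 1 ≤ q) (h1 : V + q = A) (h2 : B + q + 1 ≤ A) :
    V^2 + (B + q)^2 + 1 ≤ A^2 + B^2 := by
  subst h1
  obtain ⟨s, rfl⟩ : ∃ s, V = B + 1 + s := ⟨V - B - 1, by omega⟩
  obtain ⟨r, rfl⟩ : ∃ r, q = r + 1 := ⟨q - 1, by omega⟩
  ring_nf
  omega

lemma sqlem2 {v t : ℕ} : (v + 1 + t)^2 + (v + 1)^2 + 1 ≤ (v + 2 + t)^2 + v^2 := by
  ring_nf
  omega

lemma sqlem3 {u v k : ℕ} (hk : 1 ≤ k) (h : v + k + 1 ≤ u) :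
    (u - k)^2 + (v + k)^2 + 1 ≤ u^2 + v^2 := by
  obtain ⟨t, rfl⟩ : ∃ t, u = v + k + 1 + t := ⟨u - v - k - 1, by omega⟩
  have h1 : v + k + 1 + t - k = v + 1 + t := by omega
  rw [h1]
  obtain ⟨r, rfl⟩ : ∃ r, k = r + 1 := ⟨k - 1, by omega⟩
  ring_nf
  nlinarith

lemma sqlem4 {u v c : ℕ} (h : c = 0 ∨ u + c ≤ v) : (u + c)^2 + (v - c)^2 ≤ u^2 + v^2 := by
  rcases h with h | h
  · subst h; simp
  · obtain ⟨t, rfl⟩ : ∃ t, v = u + c + t := ⟨v - u - c, by omega⟩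
    have h1 : u + c + t - c = u + t := by omega
    rw [h1]
    ring_nf
    nlinarith

set_option maxHeartbeats 1000000 in
lemma improve {m d : ℕ} (p : Fin d → ℕ) (hp : ∀ j, 1 ≤ p j) (n : Fin d → ℕ)
    (x : Fin m → Fin d → ℕ) (hx : IsSchedule n x) {a b : Fin m} {j : Fin d}
    (hgap : x b j + Finset.univ.sup p + 1 ≤ x a j) :
    ∃ x' : Fin m → Fin d → ℕ, IsSchedule n x' ∧
      Cmax p x' ≤ Cmax p x ∧ Cmin p x ≤ Cmin p x' ∧ Phi p n x' < Phi p n x := by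
  classical
  have hpj : 1 ≤ p j := hp j
  have hpmaxj : p j ≤ Finset.univ.sup p := Finset.le_sup (Finset.mem_univ j)
  have hpmax1 : 1 ≤ Finset.univ.sup p := le_trans hpj hpmaxj
  have hab : a ≠ b := by
    intro h; rw [h] at hgap; omega
  haveI : Nonempty (Fin m) := ⟨a⟩
  have hsplit : ∀ v : Fin d → ℕ,
      (∑ j', v j' * p j') = v j * p j + ∑ j' ∈ Finset.univ.erase j, v j' * p j' :=
    fun v => (Finset.add_sum_erase _ _ (Finset.mem_univ j)).symm
  have hsplitsq : ∀ v : Fin d → ℕ,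
      (∑ j', (v j')^2) = (v j)^2 + ∑ j' ∈ Finset.univ.erase j, (v j')^2 :=
    fun v => (Finset.add_sum_erase _ _ (Finset.mem_univ j)).symm
  have hCmax_le : ∀ i, load p x i ≤ Cmax p x := fun i => Finset.le_sup (Finset.mem_univ i)
  have hCmin_le : ∀ i, Cmin p x ≤ load p x i := fun i => Nat.sInf_le ⟨i, rfl⟩
  have hLa : load p x a = x a j * p j + ∑ j' ∈ Finset.univ.erase j, x a j' * p j' := hsplit (x a)
  have hLb : load p x b = x b j * p j + ∑ j' ∈ Finset.univ.erase j, x b j' * p j' := hsplit (x b)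
  by_cases hBig : load p x b + p j ≤ load p x a
  · -- Move 1 : shift one job of type j from a to b
    have hxa1 : 1 ≤ x a j := by omega
    obtain ⟨va, hvaj, hvao⟩ : ∃ va : Fin d → ℕ, va j = x a j - 1 ∧ ∀ j', j' ≠ j → va j' = x a j' :=
      ⟨fun j' => if j' = j then x a j - 1 else x a j', by simp, fun j' h => by simp [h]⟩
    obtain ⟨vb, hvbj, hvbo⟩ : ∃ vb : Fin d → ℕ, vb j = x b j + 1 ∧ ∀ j', j' ≠ j → vb j' = x b j' :=
      ⟨fun j' => if j' = j then x b j + 1 else x b j', by simp, fun j' h => by simp [h]⟩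
    have hsum : ∀ j₀, va j₀ + vb j₀ = x a j₀ + x b j₀ := by
      intro j₀
      by_cases hj₀ : j₀ = j
      · subst hj₀; rw [hvaj, hvbj]; omega
      · rw [hvao j₀ hj₀, hvbo j₀ hj₀]
    have hva_load : (∑ j', va j' * p j') + p j = load p x a := by
      rw [hsplit va, hLa]
      have h1 : ∑ j' ∈ Finset.univ.erase j, va j' * p j'
          = ∑ j' ∈ Finset.univ.erase j, x a j' * p j' := by
        apply Finset.sum_congr rfl
        intro j' hj'
        rw [hvao j' (Finset.mem_erase.mp hj').1]
      rw [h1, hvaj]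
      obtain ⟨t, ht⟩ : ∃ t, x a j = t + 1 := ⟨x a j - 1, by omega⟩
      rw [ht]
      simp [add_mul]
      ring
    have hvb_load : (∑ j', vb j' * p j') = load p x b + p j := by
      rw [hsplit vb, hLb]
      have h1 : ∑ j' ∈ Finset.univ.erase j, vb j' * p j'
          = ∑ j' ∈ Finset.univ.erase j, x b j' * p j' := by
        apply Finset.sum_congr rfl
        intro j' hj'
        rw [hvbo j' (Finset.mem_erase.mp hj').1]
      rw [h1, hvbj, add_mul]
      ring
    refine ⟨repl x va vb a b, repl_sched n x va vb hab hx hsum, ?_, ?_, ?_⟩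
    · apply Finset.sup_le
      intro i _
      by_cases hib : i = b
      · rw [hib, repl_load_b p x va vb hab, hvb_load]
        exact le_trans hBig (hCmax_le a)
      · by_cases hia : i = a
        · rw [hia, repl_load_a]
          have := hCmax_le a
          omega
        · rw [repl_load_o p x va vb i hia hib]
          exact hCmax_le i
    · apply le_csInf (Set.range_nonempty _)
      rintro _ ⟨i, rfl⟩
      by_cases hib : i = b
      · rw [hib, repl_load_b p x va vb hab, hvb_load]
        have := hCmin_le b
        omega
      · by_cases hia : i = a
        · rw [hia, repl_load_a]
          have h1 := hCmin_le b
          omega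
        · rw [repl_load_o p x va vb i hia hib]
          exact hCmin_le i
    · -- potential decreases
      have hPhi1 := repl_phi1 p x va vb hab
      have hPhi2 := repl_phi2 x va vb hab
      -- count part strictly decreases
      have hcsq : (∑ j', (va j')^2) + (∑ j', (vb j')^2) + 1
          ≤ (∑ j', (x a j')^2) + (∑ j', (x b j')^2) := by
        rw [hsplitsq va, hsplitsq vb, hsplitsq (x a), hsplitsq (x b)]
        have h1 : ∑ j' ∈ Finset.univ.erase j, (va j')^2
            = ∑ j' ∈ Finset.univ.erase j, (x a j')^2 :=
          Finset.sum_congr rfl (fun j' hj' => by rw [hvao j' (Finset.mem_erase.mp hj').1])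
        have h2 : ∑ j' ∈ Finset.univ.erase j, (vb j')^2
            = ∑ j' ∈ Finset.univ.erase j, (x b j')^2 :=
          Finset.sum_congr rfl (fun j' hj' => by rw [hvbo j' (Finset.mem_erase.mp hj').1])
        rw [h1, h2]
        have h3 : (va j)^2 + (vb j)^2 + 1 ≤ (x a j)^2 + (x b j)^2 := by
          rw [hvaj, hvbj]
          obtain ⟨t, ht⟩ : ∃ t, x a j = x b j + 2 + t := ⟨x a j - x b j - 2, by omega⟩
          rw [ht]
          have h4 : x b j + 2 + t - 1 = x b j + 1 + t := by omega
          rw [h4]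
          exact sqlem2
        omega
      have hsched' := repl_sched n x va vb hab hx hsum
      have hP2b := Phi2_le n (repl x va vb a b) hsched'
      simp only [Phi]
      rcases Nat.lt_or_ge (load p x a) (load p x b + p j + 1) with hEq | hStrict
      · -- loads swap exactly
        have h1 : (∑ j', va j' * p j') = load p x b := by omega
        have h2 : (∑ j', vb j' * p j') = load p x a := by omega
        rw [h1, h2] at hPhi1
        have hPhi1eq : (∑ i, (load p (repl x va vb a b) i)^2) = ∑ i, (load p x i)^2 := by
          omega
        rw [hPhi1eq]
        have hlt : (∑ i, ∑ j', (repl x va vb a b i j')^2) < ∑ i, ∑ j', (x i j')^2 := by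
          omega
        exact Nat.add_lt_add_left hlt _
      · -- loads strictly balance
        have hsq1 : ((∑ j', va j' * p j'))^2 + ((∑ j', vb j' * p j'))^2 + 1
            ≤ (load p x a)^2 + (load p x b)^2 := by
          rw [hvb_load]
          exact sqlem1 hpj hva_load hStrict
        have hPhi1lt : (∑ i, (load p (repl x va vb a b) i)^2) + 1 ≤ ∑ i, (load p x i)^2 := by
          omega
        exact potlem hPhi1lt hP2b
  · -- Move 3 : exchange k jobs of type j against a block of other jobs, loads unchanged
    have hnb : load p x a + 1 ≤ load p x b + p j := by omega
    have hmul : (x b j + Finset.univ.sup p + 1) * p j ≤ x a j * p j :=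
      Nat.mul_le_mul_right _ hgap
    have hexp : (x b j + Finset.univ.sup p + 1) * p j
        = x b j * p j + (Finset.univ.sup p) * p j + p j := by ring
    have hRb : (∑ j' ∈ Finset.univ.erase j, x a j' * p j')
          + (Finset.univ.sup p) * p j + 1 ≤ ∑ j' ∈ Finset.univ.erase j, x b j' * p j' := by
      rw [hexp] at hmul
      linarith [hLa, hLb, hnb, hmul]
    obtain ⟨w, hwj, hwo⟩ : ∃ w : Fin d → ℕ, w j = 0 ∧
        ∀ j', j' ≠ j → w j' = x b j' - x a j' :=
      ⟨fun j' => if j' = j then 0 else x b j' - x a j', by simp, fun j' h => by simp [h]⟩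
    have hwsum : (Finset.univ.sup p) * p j + 1 ≤ ∑ j', w j' * p j' := by
      have h1 : ∑ j' ∈ Finset.univ.erase j, x b j' * p j'
          ≤ ∑ j' ∈ Finset.univ.erase j, (w j' * p j' + x a j' * p j') := by
        apply Finset.sum_le_sum
        intro j' hj'
        have h2 := hwo j' (Finset.mem_erase.mp hj').1
        have h3 : x b j' ≤ w j' + x a j' := by omega
        calc x b j' * p j' ≤ (w j' + x a j') * p j' := Nat.mul_le_mul_right _ h3
          _ = w j' * p j' + x a j' * p j' := add_mul _ _ _
      rw [Finset.sum_add_distrib] at h1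
      have h4 : ∑ j', w j' * p j'
          = w j * p j + ∑ j' ∈ Finset.univ.erase j, w j' * p j' := hsplit w
      rw [hwj] at h4
      simp only [zero_mul, zero_add] at h4
      rw [h4]
      linarith [hRb]
    obtain ⟨c, hcw, hdvd, hc1, hcmax⟩ := block_lemma p hp
      (fun j' => Finset.le_sup (Finset.mem_univ j')) hpj w hwsum
    have hk : ((∑ j', c j' * p j') / p j) * p j = ∑ j', c j' * p j' :=
      Nat.div_mul_cancel hdvd
    obtain ⟨k, hkdef⟩ : ∃ k, k = (∑ j', c j' * p j') / p j := ⟨_, rfl⟩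
    rw [← hkdef] at hk
    have hk1 : 1 ≤ k := by
      rcases Nat.eq_zero_or_pos k with h | h
      · rw [h, zero_mul] at hk; omega
      · exact h
    have hkS : k ≤ Finset.univ.sup p := by
      have h1 : k * p j ≤ (Finset.univ.sup p) * p j := by omega
      exact Nat.le_of_mul_le_mul_right h1 (by omega)
    have hcj : c j = 0 := by have := hcw j; omega
    have hkxa : k ≤ x a j := by omega
    have hcxb : ∀ j', c j' ≤ x b j' := by
      intro j'
      by_cases hj' : j' = j
      · subst hj'; omega
      · have h1 := hcw j'
        have h2 := hwo j' hj'
        omega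
    obtain ⟨va, hvaj, hvao⟩ : ∃ va : Fin d → ℕ, va j = x a j - k ∧
        ∀ j', j' ≠ j → va j' = x a j' + c j' :=
      ⟨fun j' => if j' = j then x a j - k else x a j' + c j', by simp, fun j' h => by simp [h]⟩
    obtain ⟨vb, hvbj, hvbo⟩ : ∃ vb : Fin d → ℕ, vb j = x b j + k ∧
        ∀ j', j' ≠ j → vb j' = x b j' - c j' :=
      ⟨fun j' => if j' = j then x b j + k else x b j' - c j', by simp, fun j' h => by simp [h]⟩
    have hsum : ∀ j₀, va j₀ + vb j₀ = x a j₀ + x b j₀ := by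
      intro j₀
      by_cases hj₀ : j₀ = j
      · subst hj₀; rw [hvaj, hvbj]; omega
      · rw [hvao j₀ hj₀, hvbo j₀ hj₀]
        have := hcxb j₀
        omega
    -- the c-sum over the erased set
    have hCS : ∑ j' ∈ Finset.univ.erase j, c j' * p j' = ∑ j', c j' * p j' := by
      have h1 := hsplit c
      rw [hcj] at h1
      simp only [zero_mul, zero_add] at h1
      omega
    -- loads are unchanged
    have hva_load : (∑ j', va j' * p j') = load p x a := by
      rw [hsplit va, hvaj, hLa]
      have h1 : ∑ j' ∈ Finset.univ.erase j, va j' * p j'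
          = (∑ j' ∈ Finset.univ.erase j, x a j' * p j') + ∑ j' ∈ Finset.univ.erase j, c j' * p j' := by
        rw [← Finset.sum_add_distrib]
        apply Finset.sum_congr rfl
        intro j' hj'
        rw [hvao j' (Finset.mem_erase.mp hj').1, add_mul]
      rw [h1, hCS]
      obtain ⟨u, hu⟩ : ∃ u, x a j = u + k := ⟨x a j - k, by omega⟩
      rw [hu]
      have h2 : u + k - k = u := by omega
      rw [h2, add_mul]
      omega
    have hvb_load : (∑ j', vb j' * p j') = load p x b := by
      rw [hsplit vb, hvbj, hLb]
      have h1 : (∑ j' ∈ Finset.univ.erase j, vb j' * p j') + ∑ j' ∈ Finset.univ.erase j, c j' * p j'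
          = ∑ j' ∈ Finset.univ.erase j, x b j' * p j' := by
        rw [← Finset.sum_add_distrib]
        apply Finset.sum_congr rfl
        intro j' hj'
        rw [hvbo j' (Finset.mem_erase.mp hj').1, ← add_mul,
          Nat.sub_add_cancel (hcxb j')]
      rw [add_mul]
      rw [hCS] at h1
      omega
    refine ⟨repl x va vb a b, repl_sched n x va vb hab hx hsum, ?_, ?_, ?_⟩
    · apply Finset.sup_le
      intro i _
      by_cases hib : i = b
      · rw [hib, repl_load_b p x va vb hab, hvb_load]
        exact hCmax_le b
      · by_cases hia : i = a
        · rw [hia, repl_load_a, hva_load]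
          exact hCmax_le a
        · rw [repl_load_o p x va vb i hia hib]
          exact hCmax_le i
    · apply le_csInf (Set.range_nonempty _)
      rintro _ ⟨i, rfl⟩
      by_cases hib : i = b
      · rw [hib, repl_load_b p x va vb hab, hvb_load]
        exact hCmin_le b
      · by_cases hia : i = a
        · rw [hia, repl_load_a, hva_load]
          exact hCmin_le a
        · rw [repl_load_o p x va vb i hia hib]
          exact hCmin_le i
    · -- potential strictly decreases : Phi1 equal, Phi2 drops
      have hPhi1 := repl_phi1 p x va vb hab
      rw [hva_load, hvb_load] at hPhi1
      have hPhi1eq : (∑ i, (load p (repl x va vb a b) i)^2) = ∑ i, (load p x i)^2 := by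
        omega
      have hPhi2 := repl_phi2 x va vb hab
      have h5 : (∑ j' ∈ Finset.univ.erase j, (va j')^2) + ∑ j' ∈ Finset.univ.erase j, (vb j')^2
          ≤ (∑ j' ∈ Finset.univ.erase j, (x a j')^2) + ∑ j' ∈ Finset.univ.erase j, (x b j')^2 := by
        rw [← Finset.sum_add_distrib, ← Finset.sum_add_distrib]
        apply Finset.sum_le_sum
        intro j' hj'
        have hne := (Finset.mem_erase.mp hj').1
        rw [hvao j' hne, hvbo j' hne]
        apply sqlem4
        rcases Nat.eq_zero_or_pos (c j') with h | h
        · exact Or.inl h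
        · right
          have h1 := hcw j'
          have h2 := hwo j' hne
          omega
      have h6 : (va j)^2 + (vb j)^2 + 1 ≤ (x a j)^2 + (x b j)^2 := by
        rw [hvaj, hvbj]
        exact sqlem3 hk1 (by omega)
      have hg2 : (∑ j', (va j')^2) + (∑ j', (vb j')^2) + 1
          ≤ (∑ j', (x a j')^2) + (∑ j', (x b j')^2) := by
        rw [hsplitsq va, hsplitsq vb, hsplitsq (x a), hsplitsq (x b)]
        omega
      simp only [Phi]
      rw [hPhi1eq]
      have hlt : (∑ i, ∑ j', (repl x va vb a b i j')^2) < ∑ i, ∑ j', (x i j')^2 := by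
        omega
      exact Nat.add_lt_add_left hlt _

lemma key {m d : ℕ} (p : Fin d → ℕ) (hp : ∀ j, 1 ≤ p j) (n : Fin d → ℕ)
    (P : (Fin m → Fin d → ℕ) → Prop)
    (hne : ∃ x, IsSchedule n x ∧ P x)
    (hclosed : ∀ x x', P x → IsSchedule n x' → Cmax p x' ≤ Cmax p x →
      Cmin p x ≤ Cmin p x' → P x') :
    ∃ xs : Fin m → Fin d → ℕ, IsSchedule n xs ∧ P xs ∧ ∀ (i : Fin m) (j : Fin d),
      n j ≤ m * xs i j + m * Finset.univ.sup p ∧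
      m * xs i j ≤ n j + m * Finset.univ.sup p := by
  classical
  set V : Set ℕ := {v | ∃ x, IsSchedule n x ∧ P x ∧ Phi p n x = v} with hV
  have hVne : V.Nonempty := by
    obtain ⟨x, hx, hPx⟩ := hne
    exact ⟨Phi p n x, x, hx, hPx, rfl⟩
  obtain ⟨x, hxsch, hxP, hxPhi⟩ := Nat.sInf_mem hVne
  refine ⟨x, hxsch, hxP, ?_⟩
  intro i j
  by_contra hcon
  -- extract a pair of machines with a large gap on type j
  have hgap : ∃ a b : Fin m, x b j + Finset.univ.sup p + 1 ≤ x a j := by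
    push_neg at hcon
    by_cases hA : n j ≤ m * x i j + m * Finset.univ.sup p
    · -- then m * x i j > n j + m * sup p ; i is the big machine
      have hB := hcon hA
      obtain ⟨b, _, hbmin⟩ := Finset.exists_min_image Finset.univ (fun i' => x i' j)
        ⟨i, Finset.mem_univ i⟩
      have hble : m * x b j ≤ n j := by
        rw [← hxsch j]
        have h1 : ∀ i' ∈ Finset.univ, x b j ≤ x i' j := fun i' _ => hbmin i' (Finset.mem_univ i')
        calc m * x b j = (Finset.univ : Finset (Fin m)).card * x b j := by
              rw [Finset.card_univ, Fintype.card_fin]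
          _ ≤ ∑ i', x i' j := Finset.card_nsmul_le_sum _ _ _ h1
      refine ⟨i, b, ?_⟩
      have h2 : m * (x b j + Finset.univ.sup p) < m * x i j := by
        rw [Nat.mul_add]
        omega
      have h3 := Nat.lt_of_mul_lt_mul_left h2
      omega
    · -- n j > m * x i j + m * sup p ; i is the small machine
      push_neg at hA
      obtain ⟨a, _, hamax⟩ := Finset.exists_max_image Finset.univ (fun i' => x i' j)
        ⟨i, Finset.mem_univ i⟩
      have hage : n j ≤ m * x a j := by
        rw [← hxsch j]
        have h1 : ∀ i' ∈ Finset.univ, x i' j ≤ x a j := fun i' _ => hamax i' (Finset.mem_univ i')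
        calc ∑ i', x i' j ≤ (Finset.univ : Finset (Fin m)).card * x a j := by
              exact Finset.sum_le_card_nsmul _ _ _ h1
          _ = m * x a j := by rw [Finset.card_univ, Fintype.card_fin]
      refine ⟨a, i, ?_⟩
      have h2 : m * (x i j + Finset.univ.sup p) < m * x a j := by
        rw [Nat.mul_add]
        omega
      have h3 := Nat.lt_of_mul_lt_mul_left h2
      omega
  obtain ⟨a, b, hab⟩ := hgap
  obtain ⟨x', hsch', hmax', hmin', hphi'⟩ := improve p hp n x hxsch hab
  have hmem : Phi p n x' ∈ V := ⟨x', hsch', hclosed x x' hxP hsch' hmax' hmin', rfl⟩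
  have hle := Nat.sInf_le hmem
  omega

theorem exists_optimal_schedules_close_to_equal_split (d m : ℕ) (hd : 1 ≤ d) (hm : 1 ≤ m)
    (p : Fin d → ℕ) (hp : ∀ j, 1 ≤ p j) (n : Fin d → ℕ) :
    (∃ xstar : Fin m → Fin d → ℕ, IsSchedule n xstar ∧
      (∀ x : Fin m → Fin d → ℕ, IsSchedule n x → Cmax p xstar ≤ Cmax p x) ∧
      ∀ (i : Fin m) (j : Fin d),
        n j ≤ m * xstar i j + m * Finset.univ.sup p ∧
        m * xstar i j ≤ n j + m * Finset.univ.sup p) ∧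
    (∃ xstar : Fin m → Fin d → ℕ, IsSchedule n xstar ∧
      (∀ x : Fin m → Fin d → ℕ, IsSchedule n x → Cmin p x ≤ Cmin p xstar) ∧
      ∀ (i : Fin m) (j : Fin d),
        n j ≤ m * xstar i j + m * Finset.univ.sup p ∧
        m * xstar i j ≤ n j + m * Finset.univ.sup p) ∧
    (∃ xstar : Fin m → Fin d → ℕ, IsSchedule n xstar ∧
      (∀ x : Fin m → Fin d → ℕ, IsSchedule n x → Cenvy p xstar ≤ Cenvy p x) ∧
      ∀ (i : Fin m) (j : Fin d),
        n j ≤ m * xstar i j + m * Finset.univ.sup p ∧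
        m * xstar i j ≤ n j + m * Finset.univ.sup p) := by
  classical
  have i0 : Fin m := ⟨0, hm⟩
  -- some schedule exists
  have hx0 : ∃ x : Fin m → Fin d → ℕ, IsSchedule n x := by
    refine ⟨fun i j => if i = i0 then n j else 0, ?_⟩
    intro j
    simp [Finset.sum_ite_eq]
  obtain ⟨x0, hx0⟩ := hx0
  refine ⟨?_, ?_, ?_⟩
  · -- Cmax minimization
    set V : Set ℕ := {v | ∃ x : Fin m → Fin d → ℕ, IsSchedule n x ∧ Cmax p x = v} with hV
    have hVne : V.Nonempty := ⟨Cmax p x0, x0, hx0, rfl⟩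
    obtain ⟨x1, hx1, hx1v⟩ := Nat.sInf_mem hVne
    obtain ⟨xs, hs1, hs2, hs3⟩ := key p hp n (fun x => Cmax p x = sInf V)
      ⟨x1, hx1, hx1v⟩
      (by
        intro x x' hPx hx' hle _
        have h1 : Cmax p x' ∈ V := ⟨x', hx', rfl⟩
        have h2 := Nat.sInf_le h1
        omega)
    refine ⟨xs, hs1, ?_, hs3⟩
    intro y hy
    rw [hs2]
    exact Nat.sInf_le ⟨y, hy, rfl⟩
  · -- Cmin maximization
    set V : Set ℕ := {v | ∃ x : Fin m → Fin d → ℕ, IsSchedule n x ∧ Cmin p x = v} with hV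
    have hVne : V.Nonempty := ⟨Cmin p x0, x0, hx0, rfl⟩
    have hVbdd : BddAbove V := by
      refine ⟨∑ j, n j * p j, ?_⟩
      rintro v ⟨x, hx, rfl⟩
      have h1 : Cmin p x ≤ load p x i0 := Nat.sInf_le ⟨i0, rfl⟩
      have h2 : load p x i0 ≤ ∑ j, n j * p j := by
        apply Finset.sum_le_sum
        intro j _
        apply Nat.mul_le_mul_right
        rw [← hx j]
        exact Finset.single_le_sum (f := fun i => x i j) (fun _ _ => Nat.zero_le _)
          (Finset.mem_univ i0)
      exact le_trans h1 h2
    obtain ⟨x1, hx1, hx1v⟩ := Nat.sSup_mem hVne hVbdd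
    obtain ⟨xs, hs1, hs2, hs3⟩ := key p hp n (fun x => Cmin p x = sSup V)
      ⟨x1, hx1, hx1v⟩
      (by
        intro x x' hPx hx' _ hge
        have h1 : Cmin p x' ∈ V := ⟨x', hx', rfl⟩
        have h2 := le_csSup hVbdd h1
        omega)
    refine ⟨xs, hs1, ?_, hs3⟩
    intro y hy
    rw [hs2]
    exact le_csSup hVbdd ⟨y, hy, rfl⟩
  · -- Cenvy minimization
    set V : Set ℕ := {v | ∃ x : Fin m → Fin d → ℕ, IsSchedule n x ∧ Cenvy p x = v} with hV
    have hVne : V.Nonempty := ⟨Cenvy p x0, x0, hx0, rfl⟩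
    obtain ⟨x1, hx1, hx1v⟩ := Nat.sInf_mem hVne
    obtain ⟨xs, hs1, hs2, hs3⟩ := key p hp n (fun x => Cenvy p x = sInf V)
      ⟨x1, hx1, hx1v⟩
      (by
        intro x x' hPx hx' hle hge
        have h1 : Cenvy p x' ∈ V := ⟨x', hx', rfl⟩
        have h2 := Nat.sInf_le h1
        have h3 : Cenvy p x' ≤ Cenvy p x := by
          simp only [Cenvy]
          omega
        omega)
    refine ⟨xs, hs1, ?_, hs3⟩
    intro y hy
    rw [hs2]
    exact Nat.sInf_le ⟨y, hy, rfl⟩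
end

section
/- For every high-multiplicity scheduling instance on identical machines the following three claims hold: there exists a schedule x* minimizing Cmax such that for all machines i and job types j, x* i j ≤ ⌊n j / m⌋ + pmax and x* i j + pmax ≥ ⌈n j / m⌉; there exists a schedule x* maximizing Cmin with the same property; and there exists a schedule x* minimizing Cenvy with the same property. Consequently, in each case, after preassigning max(⌈n j / m⌉ − pmax, 0) jobs of each type j to each machine, at most 2·pmax further jobs of each type are placed on any machine. -/
lemma list_sum_count {d : ℕ} (p : Fin d → ℕ) (l : List (Fin d)) :
    (l.map p).sum = ∑ b, l.count b * p b := by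
  induction l with
  | nil => simp
  | cons a l ih =>
    simp only [List.map_cons, List.sum_cons, ih, List.count_cons, Nat.add_mul,
      Finset.sum_add_distrib]
    simp [Finset.sum_ite_eq', add_comm]

lemma count_bind {d : ℕ} (e : Fin d → ℕ) (b : Fin d) :
    ((List.finRange d).flatMap (fun j => List.replicate (e j) j)).count b = e b := by
  rw [List.count_flatMap]
  have : (List.count b ∘ fun j => List.replicate (e j) j) = fun j => if j = b then e j else 0 := by
    funext j
    simp only [Function.comp_apply, List.count_replicate]
    by_cases h : j = b <;> simp [h, beq_iff_eq]
  rw [this, ← Fin.sum_univ_def]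
  simp

lemma subset_sum_multiple {d : ℕ} (p e : Fin d → ℕ) (P q : ℕ)
    (hq : 1 ≤ q) (hP : 1 ≤ P) (hpP : ∀ b, p b ≤ P) (hp : ∀ b, 1 ≤ p b)
    (hsum : q * P ≤ ∑ b, e b * p b) :
    ∃ c : Fin d → ℕ, (∀ b, c b ≤ e b) ∧ ∃ k, 1 ≤ k ∧ k ≤ P ∧ ∑ b, c b * p b = k * q := by
  set L : List (Fin d) := (List.finRange d).flatMap (fun j => List.replicate (e j) j) with hL
  have hcount : ∀ b, L.count b = e b := fun b => count_bind e b
  set M : List ℕ := L.map p with hM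
  have htot : M.sum = ∑ b, e b * p b := by
    rw [hM, list_sum_count]; exact Finset.sum_congr rfl (fun b _ => by rw [hcount])
  have hMlen : M.length = L.length := by simp [hM]
  have hMmem : ∀ x ∈ M, 1 ≤ x ∧ x ≤ P := by
    intro x hx
    obtain ⟨b, _, rfl⟩ := List.mem_map.1 hx
    exact ⟨hp b, hpP b⟩
  have hlen : q ≤ M.length := by
    have h1 : M.sum ≤ M.length * P := by
      have := List.sum_le_card_nsmul M P (fun x hx => (hMmem x hx).2)
      simpa [smul_eq_mul, mul_comm] using this
    have h2 : q * P ≤ M.length * P := by omega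
    exact Nat.le_of_mul_le_mul_right h2 (by omega)
  set s : ℕ → ℕ := fun t => (M.take t).sum with hs
  have hstep : ∀ t, (ht : t < M.length) → s (t+1) = s t + M[t]'ht := by
    intro t ht
    exact List.sum_take_succ M t ht
  have hmono1 : ∀ b : ℕ, b ≤ M.length → ∀ a : ℕ, a ≤ b → s a + (b - a) ≤ s b := by
    intro b
    induction b with
    | zero => intro _ a ha; interval_cases a; simp
    | succ t ih =>
      intro hbl a hab
      rcases Nat.eq_or_lt_of_le hab with h | h
      · subst h; omega
      · have ht : t < M.length := by omega
        have h2 := ih (by omega) a (by omega)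
        have h3 := hstep t ht
        have h4 : 1 ≤ M[t]'ht := (hMmem _ (List.getElem_mem _)).1
        omega
  have hmono2 : ∀ b : ℕ, b ≤ M.length → ∀ a : ℕ, a ≤ b → s b ≤ s a + (b - a) * P := by
    intro b
    induction b with
    | zero => intro _ a ha; interval_cases a; simp
    | succ t ih =>
      intro hbl a hab
      rcases Nat.eq_or_lt_of_le hab with h | h
      · subst h; simp
      · have ht : t < M.length := by omega
        have h2 := ih (by omega) a (by omega)
        have h3 := hstep t ht
        have h4 : M[t]'ht ≤ P := (hMmem _ (List.getElem_mem _)).2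
        have h5 : (t + 1 - a) * P = (t - a) * P + P := by
          rw [show t + 1 - a = (t - a) + 1 by omega, add_mul, one_mul]
        omega
  have hmaps : ∀ t ∈ Finset.range (q+1), s t % q ∈ Finset.range q := by
    intro t _; exact Finset.mem_range.2 (Nat.mod_lt _ (by omega))
  obtain ⟨a, ha, b, hb, hab, heq⟩ := Finset.exists_ne_map_eq_of_card_lt_of_maps_to
    (by simp) hmaps
  rw [Finset.mem_range] at ha hb
  wlog hlt : a < b generalizing a b
  · exact this b hb a ha (Ne.symm hab) heq.symm (by omega)
  have hble : b ≤ M.length := by omega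
  have hm1 := hmono1 b hble a (by omega)
  have hm2 := hmono2 b hble a (by omega)
  have hbaP : (b - a) * P ≤ q * P := Nat.mul_le_mul_right _ (by omega)
  have hdvd : q ∣ (s b - s a) := by
    exact Nat.dvd_of_mod_eq_zero (Nat.sub_mod_eq_zero_of_mod_eq heq.symm)
  obtain ⟨k, hk⟩ := hdvd
  set seg : List (Fin d) := (L.take b).drop a with hseg
  have h1 : seg.map p = (M.take b).drop a := by
    simp [hseg, hM, List.map_drop, List.map_take]
  have h4 : (M.take b).sum = (M.take a).sum + ((M.take b).drop a).sum := by
    conv_lhs => rw [← List.take_append_drop a (M.take b)]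
    rw [List.sum_append, List.take_take, min_eq_left (by omega : a ≤ b)]
  have ea : s a = (M.take a).sum := rfl
  have eb : s b = (M.take b).sum := rfl
  have hsegsum : (seg.map p).sum = s b - s a := by
    rw [h1]; omega
  refine ⟨fun b' => seg.count b', ?_, k, ?_, ?_, ?_⟩
  · intro b'
    rw [← hcount b']
    exact List.Sublist.count_le b' ((List.drop_sublist _ _).trans (List.take_sublist _ _))
  · rcases Nat.eq_zero_or_pos k with h | h
    · exfalso; rw [h, mul_zero] at hk; omega
    · exact h
  · by_contra h
    have h1 : q * (P + 1) ≤ q * k := Nat.mul_le_mul_left _ (by omega)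
    have h2 : q * k ≤ q * P := by omega
    nlinarith
  · rw [← list_sum_count, hsegsum, hk, mul_comm]

lemma sum_split_two {α : Type*} [Fintype α] [DecidableEq α] (f : α → ℕ) {i i' : α}
    (h : i ≠ i') :
    ∑ a, f a = f i + f i' + ∑ a ∈ (Finset.univ.erase i).erase i', f a := by
  rw [← Finset.add_sum_erase _ f (Finset.mem_univ i)]
  rw [← Finset.add_sum_erase _ f (Finset.mem_erase.2 ⟨Ne.symm h, Finset.mem_univ i'⟩)]
  ring

lemma exchange_s9 {m d : ℕ} (p : Fin d → ℕ) {n : Fin d → ℕ} {x : Fin m → Fin d → ℕ}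
    (hx : IsSchedule n x) {i i' : Fin m} (hii : i ≠ i') {j : Fin d}
    (k : ℕ) (c' : Fin d → ℕ) (hc'j : c' j = 0)
    (hc' : ∀ b, c' b ≤ x i' b - x i b)
    (hk1 : 1 ≤ k) (hkx : k + x i' j < x i j) :
    ∃ y : Fin m → Fin d → ℕ, IsSchedule n y ∧
      (load p y i + k * p j = load p x i + ∑ b, c' b * p b) ∧
      (load p y i' + ∑ b, c' b * p b = load p x i' + k * p j) ∧
      (∀ a, a ≠ i → a ≠ i' → load p y a = load p x a) ∧
      (∑ a, ∑ b, y a b * y a b) < ∑ a, ∑ b, x a b * x a b := by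
  classical
  set c : Fin d → ℕ := fun b => if b = j then k else 0 with hc
  set y : Fin m → Fin d → ℕ := fun a b =>
    if a = i then x i b - c b + c' b else if a = i' then x i' b + c b - c' b else x a b with hy
  have hcx : ∀ b, c b ≤ x i b := by
    intro b; rw [hc]; by_cases h : b = j <;> simp [h] <;> omega
  have hc'x : ∀ b, c' b ≤ x i' b := fun b => le_trans (hc' b) (Nat.sub_le _ _)
  have A1 : ∀ b, y i b + c b = x i b + c' b := by
    intro b; simp only [hy, if_pos rfl]; have := hcx b; omega
  have A2 : ∀ b, y i' b + c' b = x i' b + c b := by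
    intro b
    have := hc'x b
    show (if i' = i then _ else if i' = i' then x i' b + c b - c' b else x i' b) + c' b = _
    rw [if_neg (Ne.symm hii), if_pos rfl]
    omega
  have A3 : ∀ a, a ≠ i → a ≠ i' → ∀ b, y a b = x a b := by
    intro a h1 h2 b; simp only [hy, if_neg h1, if_neg h2]
  have hcsum : ∑ b, c b * p b = k * p j := by
    rw [hc]
    rw [Finset.sum_congr rfl (fun b _ => by
      show (if b = j then k else 0) * p b = if b = j then k * p b else 0
      split <;> simp)]
    simp [Finset.sum_ite_eq']
  refine ⟨y, ?_, ?_, ?_, ?_, ?_⟩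
  · -- IsSchedule
    intro b
    rw [← hx b, sum_split_two (fun a => y a b) hii, sum_split_two (fun a => x a b) hii]
    have h1 := A1 b; have h2 := A2 b
    have h3 : ∑ a ∈ (Finset.univ.erase i).erase i', y a b
        = ∑ a ∈ (Finset.univ.erase i).erase i', x a b := by
      apply Finset.sum_congr rfl
      intro a ha
      rw [Finset.mem_erase, Finset.mem_erase] at ha
      exact A3 a ha.2.1 ha.1 b
    omega
  · -- load y i
    have : ∀ b, y i b * p b + c b * p b = x i b * p b + c' b * p b := by
      intro b
      rw [← Nat.add_mul, ← Nat.add_mul, A1 b]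
    have hsum : load p y i + ∑ b, c b * p b = load p x i + ∑ b, c' b * p b := by
      unfold load
      rw [← Finset.sum_add_distrib, ← Finset.sum_add_distrib]
      exact Finset.sum_congr rfl (fun b _ => this b)
    rw [hcsum] at hsum; exact hsum
  · have : ∀ b, y i' b * p b + c' b * p b = x i' b * p b + c b * p b := by
      intro b
      rw [← Nat.add_mul, ← Nat.add_mul, A2 b]
    have hsum : load p y i' + ∑ b, c' b * p b = load p x i' + ∑ b, c b * p b := by
      unfold load
      rw [← Finset.sum_add_distrib, ← Finset.sum_add_distrib]
      exact Finset.sum_congr rfl (fun b _ => this b)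
    rw [hcsum] at hsum; exact hsum
  · intro a h1 h2
    unfold load
    exact Finset.sum_congr rfl (fun b _ => by rw [A3 a h1 h2 b])
  · -- Phi decreases
    rw [sum_split_two (fun a => ∑ b, y a b * y a b) hii,
        sum_split_two (fun a => ∑ b, x a b * x a b) hii]
    have h3 : ∑ a ∈ (Finset.univ.erase i).erase i', (∑ b, y a b * y a b)
        = ∑ a ∈ (Finset.univ.erase i).erase i', (∑ b, x a b * x a b) := by
      apply Finset.sum_congr rfl
      intro a ha
      rw [Finset.mem_erase, Finset.mem_erase] at ha
      exact Finset.sum_congr rfl (fun b _ => by rw [A3 a ha.2.1 ha.1 b])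
    rw [h3]
    have key : (∑ b, y i b * y i b) + (∑ b, y i' b * y i' b)
        < (∑ b, x i b * x i b) + (∑ b, x i' b * x i' b) := by
      rw [← Finset.sum_add_distrib, ← Finset.sum_add_distrib]
      apply Finset.sum_lt_sum
      · intro b _
        by_cases hbj : b = j
        · subst hbj
          have h1 := A1 b; have h2 := A2 b
          have hcb : c b = k := by rw [hc]; simp
          rw [hcb] at h1 h2
          rw [hc'j] at *
          -- y i b = x i b - k, y i' b = x i' b + k
          have e1 : y i b + k = x i b := by omega
          have e2 : y i' b = x i' b + k := by omega
          nlinarith [e1, e2, hkx, hk1]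
        · have hcb : c b = 0 := by rw [hc]; simp [hbj]
          have h1 := A1 b; have h2 := A2 b
          rw [hcb] at h1 h2
          have e1 : y i b = x i b + c' b := by omega
          have e2 : y i' b + c' b = x i' b := by omega
          have hc'b := hc' b
          rcases Nat.eq_zero_or_pos (c' b) with h | h
          · rw [h] at e1 e2; simp at e1 e2; rw [e1, e2]
          · have : x i b + c' b ≤ x i' b := by
              have := Nat.le_sub_iff_add_le' ?_ |>.1 hc'b
              · omega
              · by_contra hcon
                push_neg at hcon
                have : x i' b - x i b = 0 := by omega
                omega
            nlinarith [e1, e2, this, h]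
      · refine ⟨j, Finset.mem_univ j, ?_⟩
        have h1 := A1 j; have h2 := A2 j
        have hcb : c j = k := by rw [hc]; simp
        rw [hcb, hc'j] at h1 h2
        have e1 : y i j + k = x i j := by omega
        have e2 : y i' j = x i' j + k := by omega
        nlinarith [e1, e2, hkx, hk1]
    omega

lemma balance {d m : ℕ} (hm : 1 ≤ m) (p : Fin d → ℕ) (hp : ∀ j, 1 ≤ p j)
    (n : Fin d → ℕ) (N : ℕ) :
    ∀ x : Fin m → Fin d → ℕ, (∑ a, ∑ b, x a b * x a b) ≤ N → IsSchedule n x →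
    ∃ y : Fin m → Fin d → ℕ, IsSchedule n y ∧
      Cmax p y ≤ Cmax p x ∧ Cmin p x ≤ Cmin p y ∧ Cenvy p y ≤ Cenvy p x ∧
      ∀ i i' j, y i j ≤ y i' j + Finset.univ.sup p := by
  induction N with
  | zero =>
    intro x hN hx
    refine ⟨x, hx, le_refl _, le_refl _, le_refl _, ?_⟩
    intro i i' j
    have h1 : x i j * x i j ≤ ∑ b, x i b * x i b :=
      Finset.single_le_sum (f := fun b => x i b * x i b) (fun b _ => Nat.zero_le _)
        (Finset.mem_univ j)
    have h2 : (∑ b, x i b * x i b) ≤ ∑ a, ∑ b, x a b * x a b :=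
      Finset.single_le_sum (f := fun a => ∑ b, x a b * x a b) (fun a _ => Nat.zero_le _)
        (Finset.mem_univ i)
    have : x i j * x i j = 0 := by omega
    have : x i j = 0 := by
      rcases Nat.eq_zero_or_pos (x i j) with h | h
      · exact h
      · exfalso; nlinarith
    omega
  | succ N ih =>
    intro x hN hx
    set P := Finset.univ.sup p with hPdef
    by_cases hbal : ∀ i i' j, x i j ≤ x i' j + P
    · exact ⟨x, hx, le_refl _, le_refl _, le_refl _, hbal⟩
    push_neg at hbal
    obtain ⟨i, i', j, hij⟩ := hbal
    have hpPj : p j ≤ P := Finset.le_sup (Finset.mem_univ j)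
    have hP1 : 1 ≤ P := le_trans (hp j) hpPj
    have hpP : ∀ b, p b ≤ P := fun b => Finset.le_sup (Finset.mem_univ b)
    have hii : i ≠ i' := by
      rintro rfl; omega
    have hCminle : ∀ a : Fin m, Cmin p x ≤ load p x a := by
      intro a; exact Nat.sInf_le ⟨a, rfl⟩
    have hCmaxle : ∀ a : Fin m, load p x a ≤ Cmax p x :=
      fun a => Finset.le_sup (Finset.mem_univ a)
    by_cases hA : load p x i' + p j ≤ load p x i
    · -- Case A : move one job of type j from i to i'
      obtain ⟨y, hy, hli, hli', hrest, hphi⟩ := exchange_s9 p hx (j := j) hii 1 (fun _ => 0) rfl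
        (fun b => Nat.zero_le _) (le_refl 1) (by omega)
      simp only [Nat.zero_mul, Finset.sum_const_zero, Nat.add_zero, Nat.one_mul] at hli hli'
      -- load y i + p j = load x i ; load y i' = load x i' + p j
      have hmax : Cmax p y ≤ Cmax p x := by
        apply Finset.sup_le
        intro a _
        by_cases h1 : a = i
        · rw [h1]; exact le_trans (by omega) (hCmaxle i)
        by_cases h2 : a = i'
        · rw [h2]; exact le_trans (by omega) (hCmaxle i)
        · rw [hrest a h1 h2]; exact hCmaxle a
      have hmin : Cmin p x ≤ Cmin p y := by
        apply le_csInf ⟨load p y ⟨0, hm⟩, Set.mem_range_self _⟩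
        rintro v ⟨a, rfl⟩
        by_cases h1 : a = i
        · rw [h1]
          have := hCminle i'
          omega
        by_cases h2 : a = i'
        · rw [h2]
          have := hCminle i'
          omega
        · rw [hrest a h1 h2]; exact hCminle a
      have henvy : Cenvy p y ≤ Cenvy p x := by
        unfold Cenvy; omega
      obtain ⟨z, hz, hz1, hz2, hz3, hz4⟩ := ih y (by omega) hy
      exact ⟨z, hz, le_trans hz1 hmax, le_trans hmin hz2, le_trans hz3 henvy, hz4⟩
    · -- Case B : load-preserving exchange
      push_neg at hA
      set e : Fin d → ℕ := fun b => if b = j then 0 else x i' b - x i b with hedef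
      have hkey : p j * P ≤ ∑ b, e b * p b := by
        have hpt : ∀ b, x i' b * p b + (if b = j then (P+1) * p j else 0)
            ≤ e b * p b + x i b * p b := by
          intro b
          simp only [hedef]
          split_ifs with hb
          · subst hb
            have h2 : (x i' b + (P+1)) * p b ≤ x i b * p b :=
              Nat.mul_le_mul_right _ (by omega)
            rw [Nat.add_mul] at h2
            omega
          · have h2 := Nat.mul_le_mul_right (p b)
              (show x i' b ≤ (x i' b - x i b) + x i b by omega)
            rw [Nat.add_mul] at h2
            omega
        have hsums : (∑ b, (x i' b * p b + if b = j then (P + 1) * p j else 0))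
            ≤ ∑ b, (e b * p b + x i b * p b) :=
          Finset.sum_le_sum (fun b _ => hpt b)
        rw [Finset.sum_add_distrib, Finset.sum_add_distrib] at hsums
        simp only [Finset.sum_ite_eq', Finset.mem_univ, if_true] at hsums
        have hloads : load p x i < load p x i' + p j := hA
        unfold load at hloads
        have hPp : (P + 1) * p j = p j * P + p j := by ring
        omega
      obtain ⟨c, hce, k, hk1, hkP, hcsum⟩ :=
        subset_sum_multiple p e P (p j) (hp j) hP1 hpP hp hkey
      have hcj : c j = 0 := by
        have := hce j
        simp only [hedef, if_pos rfl] at this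
        omega
      have hc' : ∀ b, c b ≤ x i' b - x i b := by
        intro b
        refine le_trans (hce b) ?_
        by_cases hb : b = j
        · simp [hedef, hb]
        · simp [hedef, hb]
      obtain ⟨y, hy, hli, hli', hrest, hphi⟩ := exchange_s9 p hx hii k c hcj hc' hk1 (by omega)
      rw [hcsum] at hli hli'
      have hloadeq : load p y = load p x := by
        funext a
        by_cases h1 : a = i
        · subst h1; omega
        by_cases h2 : a = i'
        · subst h2; omega
        · exact hrest a h1 h2
      have hmax : Cmax p y = Cmax p x := by unfold Cmax; rw [hloadeq]
      have hmin : Cmin p y = Cmin p x := by unfold Cmin; rw [hloadeq]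
      have henvy : Cenvy p y = Cenvy p x := by unfold Cenvy; rw [hmax, hmin]
      obtain ⟨z, hz, hz1, hz2, hz3, hz4⟩ := ih y (by omega) hy
      exact ⟨z, hz, le_trans hz1 (le_of_eq hmax), le_trans (le_of_eq hmin.symm) hz2,
        le_trans hz3 (le_of_eq henvy), hz4⟩

lemma balanced_bounds {d m : ℕ} (hm : 1 ≤ m) (p : Fin d → ℕ) (n : Fin d → ℕ)
    {y : Fin m → Fin d → ℕ} (hy : IsSchedule n y)
    (hbal : ∀ i i' j, y i j ≤ y i' j + Finset.univ.sup p) :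
    ∀ (i : Fin m) (j : Fin d),
      y i j ≤ n j / m + Finset.univ.sup p ∧
      (n j + m - 1) / m ≤ y i j + Finset.univ.sup p := by
  intro i j
  have hne : (Finset.univ : Finset (Fin m)).Nonempty := ⟨⟨0, hm⟩, Finset.mem_univ _⟩
  obtain ⟨imin, _, hmin⟩ := Finset.exists_min_image Finset.univ (fun a => y a j) hne
  obtain ⟨imax, _, hmax⟩ := Finset.exists_max_image Finset.univ (fun a => y a j) hne
  have hsum : ∑ a, y a j = n j := hy j
  have hminle : m * y imin j ≤ n j := by
    rw [← hsum]
    calc m * y imin j = ∑ _a : Fin m, y imin j := by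
          simp [Finset.sum_const, Finset.card_univ, mul_comm]
      _ ≤ ∑ a, y a j := Finset.sum_le_sum (fun a _ => hmin a (Finset.mem_univ a))
  have hmaxge : n j ≤ m * y imax j := by
    rw [← hsum]
    calc ∑ a, y a j ≤ ∑ _a : Fin m, y imax j :=
          Finset.sum_le_sum (fun a _ => hmax a (Finset.mem_univ a))
      _ = m * y imax j := by simp [Finset.sum_const, Finset.card_univ, mul_comm]
  constructor
  · have h1 : y imin j ≤ n j / m := Nat.le_div_iff_mul_le (by omega) |>.2 (by rw [Nat.mul_comm]; omega)
    have h2 := hbal i imin j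
    omega
  · have h1 : (n j + m - 1) / m ≤ y imax j := by
      rw [Nat.div_le_iff_le_mul_add_pred (by omega)]
      omega
    have h2 := hbal imax i j
    omega

theorem exists_optimal_schedules_floor_ceil_bounds (d m : ℕ) (hd : 1 ≤ d) (hm : 1 ≤ m)
    (p : Fin d → ℕ) (hp : ∀ j, 1 ≤ p j) (n : Fin d → ℕ) :
    (∃ xstar : Fin m → Fin d → ℕ, IsSchedule n xstar ∧
      (∀ x : Fin m → Fin d → ℕ, IsSchedule n x → Cmax p xstar ≤ Cmax p x) ∧
      ∀ (i : Fin m) (j : Fin d),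
        xstar i j ≤ n j / m + Finset.univ.sup p ∧
        (n j + m - 1) / m ≤ xstar i j + Finset.univ.sup p) ∧
    (∃ xstar : Fin m → Fin d → ℕ, IsSchedule n xstar ∧
      (∀ x : Fin m → Fin d → ℕ, IsSchedule n x → Cmin p x ≤ Cmin p xstar) ∧
      ∀ (i : Fin m) (j : Fin d),
        xstar i j ≤ n j / m + Finset.univ.sup p ∧
        (n j + m - 1) / m ≤ xstar i j + Finset.univ.sup p) ∧
    (∃ xstar : Fin m → Fin d → ℕ, IsSchedule n xstar ∧
      (∀ x : Fin m → Fin d → ℕ, IsSchedule n x → Cenvy p xstar ≤ Cenvy p x) ∧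
      ∀ (i : Fin m) (j : Fin d),
        xstar i j ≤ n j / m + Finset.univ.sup p ∧
        (n j + m - 1) / m ≤ xstar i j + Finset.univ.sup p) := by
  have hx0 : IsSchedule n (fun i j => if i = ⟨0, hm⟩ then n j else 0) := by
    intro j
    simp [Finset.sum_ite_eq']
  have bal : ∀ x : Fin m → Fin d → ℕ, IsSchedule n x →
      ∃ y : Fin m → Fin d → ℕ, IsSchedule n y ∧
        Cmax p y ≤ Cmax p x ∧ Cmin p x ≤ Cmin p y ∧ Cenvy p y ≤ Cenvy p x ∧
        ∀ i i' j, y i j ≤ y i' j + Finset.univ.sup p :=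
    fun x hx => balance hm p hp n _ x (le_refl _) hx
  refine ⟨?_, ?_, ?_⟩
  · -- Cmax
    set V : Set ℕ := {v | ∃ x : Fin m → Fin d → ℕ, IsSchedule n x ∧ Cmax p x = v} with hV
    have hVne : V.Nonempty := ⟨_, _, hx0, rfl⟩
    obtain ⟨x1, hx1, hval⟩ := Nat.sInf_mem hVne
    obtain ⟨y, hy, hy1, _, _, hybal⟩ := bal x1 hx1
    refine ⟨y, hy, ?_, balanced_bounds hm p n hy hybal⟩
    intro x hx
    exact le_trans hy1 (hval ▸ Nat.sInf_le ⟨x, hx, rfl⟩)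
  · -- Cmin
    set V : Set ℕ := {v | ∃ x : Fin m → Fin d → ℕ, IsSchedule n x ∧ Cmin p x = v} with hV
    have hVne : V.Nonempty := ⟨_, _, hx0, rfl⟩
    have hVbdd : BddAbove V := by
      refine ⟨∑ j, n j * p j, ?_⟩
      rintro v ⟨x, hx, rfl⟩
      have h1 : Cmin p x ≤ load p x ⟨0, hm⟩ := Nat.sInf_le ⟨_, rfl⟩
      refine le_trans h1 (Finset.sum_le_sum fun j _ => ?_)
      have : x ⟨0, hm⟩ j ≤ n j := by
        rw [← hx j]
        exact Finset.single_le_sum (f := fun a => x a j) (fun a _ => Nat.zero_le _)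
          (Finset.mem_univ _)
      exact Nat.mul_le_mul_right _ this
    obtain ⟨x1, hx1, hval⟩ := Nat.sSup_mem hVne hVbdd
    obtain ⟨y, hy, _, hy2, _, hybal⟩ := bal x1 hx1
    refine ⟨y, hy, ?_, balanced_bounds hm p n hy hybal⟩
    intro x hx
    exact le_trans (hval ▸ le_csSup hVbdd ⟨x, hx, rfl⟩) hy2
  · -- Cenvy
    set V : Set ℕ := {v | ∃ x : Fin m → Fin d → ℕ, IsSchedule n x ∧ Cenvy p x = v} with hV
    have hVne : V.Nonempty := ⟨_, _, hx0, rfl⟩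
    obtain ⟨x1, hx1, hval⟩ := Nat.sInf_mem hVne
    obtain ⟨y, hy, _, _, hy3, hybal⟩ := bal x1 hx1
    refine ⟨y, hy, ?_, balanced_bounds hm p n hy hybal⟩
    intro x hx
    exact le_trans hy3 (hval ▸ Nat.sInf_le ⟨x, hx, rfl⟩)
end

section
/- Correctness of the reduction from Q‖C_max to P‖C_max: Let p : Fin d → ℕ with p j ≥ 1 for all j, n : Fin d → ℕ, τ ≥ 1, speeds s : Fin τ → ℕ with s i ≥ 1 for all i, machine multiplicities mq : Fin τ → ℕ with ∑_i mq i ≥ 1, and a threshold u ∈ ℕ. Set smax = max_i s i, u' = 2·smax·u + 1 and M = ∑_i mq i. Then the following are equivalent: (1) there exists an assignment x : (Σ i : Fin τ, Fin (mq i)) → Fin d → ℕ with ∑_{machines} x · j = n j for every j and ∑_j p j · x ⟨i,k⟩ j ≤ s i · u for every machine ⟨i,k⟩; (2) there exists a function y : Fin M → (Fin d ⊕ Fin τ) → ℕ with ∑_{l} y l (inl j) = n j for every j, ∑_{l} y l (inr i) = mq i for every i, and for every l ∈ Fin M, ∑_j p j · y l (inl j) + ∑_i (u' − s i · u) · y l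 (inr i) ≤ u'. -/
/-!
A machine of speed `s i` is encoded as an identical machine of capacity `u'` that carries a dummy
job of size `u' - s i * u`, leaving exactly `s i * u` for the real jobs. Since `u' > 2 * s i * u`,
each dummy job is larger than `u' / 2`, so no machine carries two of them; as there are exactly as
many dummy jobs as machines, every machine carries exactly one, which labels it with a machine
type, and these labels hit type `i` exactly `mq i` times.
-/

open Finset

theorem exists_eq_pi_single_of_sum_eq_one {ι : Type*} [Fintype ι] [DecidableEq ι]
    {v : ι → ℕ} (hv : ∑ i, v i = 1) : ∃ i, v = Pi.single i 1 := by
  obtain ⟨i, -, hi⟩ := exists_ne_zero_of_sum_ne_zero (hv ▸ one_ne_zero)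
  refine ⟨i, funext fun k => ?_⟩
  have hsplit := add_sum_erase univ v (mem_univ i)
  have hrest : ∀ k ∈ univ.erase i, v k = 0 := sum_eq_zero_iff.mp (by omega)
  rcases eq_or_ne k i with rfl | hk
  · simp only [Pi.single_eq_same]
    omega
  · simp [hk, hrest k (by simp [hk])]

theorem sum_le_one_of_sum_mul_le {ι : Type*} {s : Finset ι} {w v : ι → ℕ} {U : ℕ}
    (hw : ∀ i ∈ s, U < 2 * w i) (h : ∑ i ∈ s, w i * v i ≤ U) :
    ∑ i ∈ s, v i ≤ 1 := by
  have : (U + 1) * ∑ i ∈ s, v i ≤ 2 * U :=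
    calc (U + 1) * ∑ i ∈ s, v i = ∑ i ∈ s, (U + 1) * v i := mul_sum _ _ _
      _ ≤ ∑ i ∈ s, 2 * w i * v i := sum_le_sum fun i hi => Nat.mul_le_mul_right _ (hw i hi)
      _ = 2 * ∑ i ∈ s, w i * v i := by simp only [mul_sum, mul_assoc]
      _ ≤ 2 * U := by omega
  nlinarith

section Labelling

variable {ι L : Type*} [DecidableEq ι] [Fintype L]

noncomputable def sigmaFinEquivOfCardFiber (f : L → ι) {mq : ι → ℕ}
    (hf : ∀ i, #{l | f l = i} = mq i) :
    (Σ i, Fin (mq i)) ≃ L :=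
  (Equiv.sigmaCongrRight fun i =>
    (Fintype.equivFinOfCardEq ((Fintype.card_subtype _).trans (hf i))).symm).trans
    (Equiv.sigmaFiberEquiv f)

theorem apply_sigmaFinEquivOfCardFiber (f : L → ι) {mq : ι → ℕ}
    (hf : ∀ i, #{l | f l = i} = mq i) (mk : Σ i, Fin (mq i)) :
    f (sigmaFinEquivOfCardFiber f hf mk) = mk.1 :=
  ((Fintype.equivFinOfCardEq ((Fintype.card_subtype _).trans (hf mk.1))).symm mk.2).prop

theorem exists_sigma_assignment_iff_exists_labelling [Fintype ι] {α : Type*} [AddCommMonoid α]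
    (mq : ι → ℕ) (hL : Fintype.card L = ∑ i, mq i) (ok : ι → α → Prop) (n : α) :
    (∃ x : (Σ i, Fin (mq i)) → α, ∑ mk, x mk = n ∧ ∀ mk, ok mk.1 (x mk)) ↔
      ∃ f : L → ι, (∀ i, #{l | f l = i} = mq i) ∧
        ∃ z : L → α, ∑ l, z l = n ∧ ∀ l, ok (f l) (z l) := by
  constructor
  · rintro ⟨x, hsum, hok⟩
    let e : (Σ i, Fin (mq i)) ≃ L := Fintype.equivOfCardEq (by simp [hL])
    refine ⟨fun l => (e.symm l).1, fun i => ?_, x ∘ e.symm, (e.symm.sum_comp x).trans hsum,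
      fun l => hok _⟩
    rw [← Fintype.card_subtype]
    exact (Fintype.card_congr ((e.symm.subtypeEquiv fun _ => Iff.rfl).trans
      (Equiv.sigmaSubtype i))).trans (Fintype.card_fin _)
  · rintro ⟨f, hf, z, hsum, hok⟩
    let E := sigmaFinEquivOfCardFiber f hf
    refine ⟨z ∘ E, (E.sum_comp z).trans hsum, fun mk => ?_⟩
    exact apply_sigmaFinEquivOfCardFiber f hf mk ▸ hok (E mk)

end Labelling

section DummyJobs

variable {ι L J : Type*} [Fintype ι] [DecidableEq ι] [Fintype L] [Fintype J]
  {p : J → ℕ} {c w mq : ι → ℕ} {n : J → ℕ} {U : ℕ}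

theorem exists_dummy_assignment_of_labelling (hcw : ∀ i, c i + w i ≤ U) {f : L → ι}
    (hf : ∀ i, #{l | f l = i} = mq i) {z : L → J → ℕ} (hz : ∑ l, z l = n)
    (hload : ∀ l, ∑ j, p j * z l j ≤ c (f l)) :
    ∃ y : L → J ⊕ ι → ℕ, (∀ j, ∑ l, y l (.inl j) = n j) ∧
      (∀ i, ∑ l, y l (.inr i) = mq i) ∧
      ∀ l, ∑ j, p j * y l (.inl j) + ∑ i, w i * y l (.inr i) ≤ U := by
  refine ⟨fun l => Sum.elim (z l) (Pi.single (f l) 1), fun j => ?_, fun i => ?_, fun l => ?_⟩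
  · simp [← hz, Finset.sum_apply]
  · simp [← hf i, Pi.single_apply, eq_comm]
  · simpa [Pi.single_apply] using (Nat.add_le_add_right (hload l) _).trans (hcw _)

theorem exists_labelling_of_dummy_assignment (hcw : ∀ i, U ≤ c i + w i)
    (hw : ∀ i, U < 2 * w i) (hL : Fintype.card L = ∑ i, mq i) {y : L → J ⊕ ι → ℕ}
    (hjobs : ∀ j, ∑ l, y l (.inl j) = n j) (hdummies : ∀ i, ∑ l, y l (.inr i) = mq i)
    (hload : ∀ l, ∑ j, p j * y l (.inl j) + ∑ i, w i * y l (.inr i) ≤ U) :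
    ∃ f : L → ι, (∀ i, #{l | f l = i} = mq i) ∧
      ∃ z : L → J → ℕ, ∑ l, z l = n ∧ ∀ l, ∑ j, p j * z l j ≤ c (f l) := by
  have hle : ∀ l, ∑ i, y l (.inr i) ≤ 1 := fun l =>
    sum_le_one_of_sum_mul_le (fun i _ => hw i) (le_of_add_le_right (hload l))
  have htot : ∑ l, ∑ i, y l (.inr i) = ∑ _l : L, 1 := by
    rw [sum_comm]
    simp [hdummies, hL]
  have hone : ∀ l, ∑ i, y l (.inr i) = 1 := fun l =>
    (sum_eq_sum_iff_of_le fun l _ => hle l).mp htot l (mem_univ l)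
  choose f hf using fun l => exists_eq_pi_single_of_sum_eq_one (hone l)
  have hy : ∀ l i, y l (.inr i) = (Pi.single (f l) 1 : ι → ℕ) i := fun l i =>
    congrFun (hf l) i
  refine ⟨f, fun i => ?_, fun l j => y l (.inl j),
    funext fun j => by simp [Finset.sum_apply, hjobs], fun l => ?_⟩
  · simp [← hdummies i, hy, Pi.single_apply, eq_comm]
  · dsimp only
    have hl := hload l
    simp only [hy, Pi.single_apply, mul_ite, mul_one, mul_zero, sum_ite_eq', mem_univ,
      if_true] at hl
    have := hcw (f l)
    omega

end DummyJobs

theorem q_cmax_to_p_cmax_reduction_general (d τ : ℕ)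
    (p : Fin d → ℕ) (n : Fin d → ℕ)
    (s : Fin τ → ℕ)
    (mq : Fin τ → ℕ) (u : ℕ)
    (u' : ℕ) (hu' : u' = 2 * Finset.univ.sup s * u + 1) :
    (∃ x : (Σ i : Fin τ, Fin (mq i)) → Fin d → ℕ,
      (∀ j, ∑ mk, x mk j = n j) ∧
      ∀ mk : Σ i : Fin τ, Fin (mq i), (∑ j, p j * x mk j) ≤ s mk.1 * u) ↔
    (∃ y : Fin (∑ i, mq i) → (Fin d ⊕ Fin τ) → ℕ,
      (∀ j, ∑ l, y l (Sum.inl j) = n j) ∧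
      (∀ i, ∑ l, y l (Sum.inr i) = mq i) ∧
      ∀ l, (∑ j, p j * y l (Sum.inl j)) +
        (∑ i, (u' - s i * u) * y l (Sum.inr i)) ≤ u') := by
  have hcap : ∀ i, 2 * (s i * u) < u' := fun i => by
    have := Nat.mul_le_mul_right u (le_sup (f := s) (mem_univ i))
    rw [hu', Nat.mul_assoc]
    omega
  have hcw : ∀ i, s i * u + (u' - s i * u) = u' := fun i => by
    have := hcap i
    omega
  have hw : ∀ i, u' < 2 * (u' - s i * u) := fun i => by
    have := hcap i
    omega
  have hL : Fintype.card (Fin (∑ i, mq i)) = ∑ i, mq i := Fintype.card_fin _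
  calc _ ↔ ∃ x : (Σ i, Fin (mq i)) → Fin d → ℕ,
        ∑ mk, x mk = n ∧ ∀ mk, ∑ j, p j * x mk j ≤ s mk.1 * u := by
        simp only [funext_iff, Finset.sum_apply]
    _ ↔ _ := exists_sigma_assignment_iff_exists_labelling mq hL
        (fun i a => ∑ j, p j * a j ≤ s i * u) n
    _ ↔ _ := ⟨fun ⟨_, hf, _, hz, hload⟩ =>
        exists_dummy_assignment_of_labelling (fun i => (hcw i).le) hf hz hload,
      fun ⟨_, hjobs, hdummies, hload⟩ =>
        exists_labelling_of_dummy_assignment (fun i => (hcw i).ge) hw hL hjobs hdummies hload⟩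

theorem q_cmax_to_p_cmax_reduction (d τ : ℕ) (hτ : 1 ≤ τ)
    (p : Fin d → ℕ) (hp : ∀ j, 1 ≤ p j) (n : Fin d → ℕ)
    (s : Fin τ → ℕ) (hs : ∀ i, 1 ≤ s i)
    (mq : Fin τ → ℕ) (hmq : 1 ≤ ∑ i, mq i) (u : ℕ)
    (u' : ℕ) (hu' : u' = 2 * Finset.univ.sup s * u + 1) :
    (∃ x : (Σ i : Fin τ, Fin (mq i)) → Fin d → ℕ,
      (∀ j, ∑ mk, x mk j = n j) ∧
      ∀ mk : Σ i : Fin τ, Fin (mq i), (∑ j, p j * x mk j) ≤ s mk.1 * u) ↔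
    (∃ y : Fin (∑ i, mq i) → (Fin d ⊕ Fin τ) → ℕ,
      (∀ j, ∑ l, y l (Sum.inl j) = n j) ∧
      (∀ i, ∑ l, y l (Sum.inr i) = mq i) ∧
      ∀ l, (∑ j, p j * y l (Sum.inl j)) +
        (∑ i, (u' - s i * u) * y l (Sum.inr i)) ≤ u') :=
  q_cmax_to_p_cmax_reduction_general d τ p n s mq u u' hu'
end

section
/- PQ-representation of MinSum-Weighted-BinPacking: Let d ≥ 1 item types have sizes p : Fin d → ℕ with 1 ≤ p j ≤ B, multiplicities n : Fin d → ℕ, and weights w : Fin d → ℕ; let B ≥ 1 be the bin capacity, m ≥ 1 the number of bins used, T ∈ ℕ a cost threshold, wmax = max_j w j, ntot = ∑_j n j and W = wmax · min(B, ntot). Then the following are equivalent: (1) there exists a packing y : Fin m → Fin d → ℕ with ∑_k y k j = n j for every j, ∑_j p j · y k j ≤ B for every bin k, and total cost ∑_{k} (k+1) · ( ∑_j w j · y k j ) ≤ T, where bin k ∈ Fin m has index k+1 ∈ {1,…,m}; (2) there exist, for each k ∈ Fin m, natural-number data (c^k : Fin d → ℕ, x^k : Fin m → ℕ, t^k : Fin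 m → ℕ, v^k ∈ ℕ, z^k ∈ ℕ) such that for every k: ∑_j p j · c^k j ≤ B, ∑_i x^k i = 1, ∑_j w j · c^k j = v^k, t^k i + W ≥ v^k + (x^k i)·W for every i ∈ Fin m, t^k i ≤ W for every i ∈ Fin m, and ∑_i (i+1) · t^k i = z^k; and globally: ∑_k c^k j = n j for every j, ∑_k x^k i = 1 for every i ∈ Fin m, and ∑_k z^k ≤ T. -/
/-!
A packing gives configurations by taking configuration `k` to be bin `k`, with `x^k` the unit
vector at `k` and `t^k i = x^k i · v^k`. Conversely, the row and column conditions make `x` a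
permutation matrix, so placing configuration `k` into the bin `i` with `x^k i = 1` gives a packing.
For a 0/1 value `x` and `v ≤ W`, the big-`M` constraint `v + x W ≤ t + W` says exactly
`x · v ≤ t`, so `∑ (i + 1) t^k i` bounds the true cost from above and attains it at `t = x · v`.
-/

open Finset

section Linearization

variable {x v t W : ℕ}

theorem add_mul_le_mul_add_of_le_one (hx : x ≤ 1) (hv : v ≤ W) : v + x * W ≤ x * v + W := by
  rcases Nat.le_one_iff_eq_zero_or_eq_one.mp hx with rfl | rfl <;> simp [hv]

theorem mul_le_of_add_mul_le_add (hx : x ≤ 1) (h : v + x * W ≤ t + W) : x * v ≤ t := by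
  rcases Nat.le_one_iff_eq_zero_or_eq_one.mp hx with rfl | rfl <;> simp_all

end Linearization

section Rearrangement

variable {R ι κ δ : Type*} [CommSemiring R] [Fintype ι] [Fintype κ] [Fintype δ]

theorem sum_mul_sum_mul_comm (a : δ → R) (x : κ → R) (c : κ → δ → R) :
    ∑ j, a j * ∑ k, x k * c k j = ∑ k, x k * ∑ j, a j * c k j := by
  simp_rw [mul_sum, mul_left_comm (a _)]
  exact sum_comm

theorem sum_sum_mul_of_sum_eq_one {x : κ → ι → R} (hx : ∀ k, ∑ i, x k i = 1) (f : κ → R) :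
    ∑ i, ∑ k, x k i * f k = ∑ k, f k := by
  rw [sum_comm]
  simp [← sum_mul, hx]

end Rearrangement

section NatBounds

variable {ι δ : Type*} [Fintype ι] [Fintype δ]

theorem le_one_of_sum_eq_one {x : ι → ℕ} (hx : ∑ i, x i = 1) (i : ι) : x i ≤ 1 :=
  hx ▸ single_le_sum (fun _ _ => Nat.zero_le _) (mem_univ i)

theorem sum_mul_le_of_sum_eq_one {x s : ι → ℕ} {B : ℕ} (hx : ∑ i, x i = 1)
    (hs : ∀ i, s i ≤ B) : ∑ i, x i * s i ≤ B :=
  calc ∑ i, x i * s i ≤ ∑ i, x i * B := sum_le_sum fun i _ => Nat.mul_le_mul_left _ (hs i)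
    _ = B := by rw [← sum_mul, hx, one_mul]

theorem sum_mul_le_sup_mul_sum (w a : δ → ℕ) : ∑ j, w j * a j ≤ univ.sup w * ∑ j, a j := by
  rw [mul_sum]
  exact sum_le_sum fun j _ => Nat.mul_le_mul_right _ (le_sup (mem_univ j))

theorem bin_weight_le {p n w : δ → ℕ} {y : ι → δ → ℕ} {B : ℕ} (hp : ∀ j, 1 ≤ p j)
    (hy : ∀ j, ∑ k, y k j = n j) {k : ι} (hcap : ∑ j, p j * y k j ≤ B) :
    ∑ j, w j * y k j ≤ univ.sup w * min B (∑ j, n j) := by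
  have hB : ∑ j, y k j ≤ B :=
    (sum_le_sum fun j _ => Nat.le_mul_of_pos_left _ (hp j)).trans hcap
  have hn : ∑ j, y k j ≤ ∑ j, n j :=
    sum_le_sum fun j _ => hy j ▸ single_le_sum (f := fun k' => y k' j)
      (fun _ _ => Nat.zero_le _) (mem_univ k)
  exact (sum_mul_le_sup_mul_sum w (y k)).trans (Nat.mul_le_mul_left _ (le_min hB hn))

end NatBounds

theorem mswbp_pq_representation_general (d m B T : ℕ)
    (p : Fin d → ℕ) (hp : ∀ j, 1 ≤ p j ∧ p j ≤ B)
    (n w : Fin d → ℕ)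
    (W : ℕ) (hW : W = Finset.univ.sup w * min B (∑ j, n j)) :
    (∃ y : Fin m → Fin d → ℕ,
      (∀ j, ∑ k, y k j = n j) ∧
      (∀ k, (∑ j, p j * y k j) ≤ B) ∧
      (∑ k : Fin m, ((k : ℕ) + 1) * ∑ j, w j * y k j) ≤ T) ↔
    (∃ (c : Fin m → Fin d → ℕ) (x : Fin m → Fin m → ℕ) (t : Fin m → Fin m → ℕ)
        (v z : Fin m → ℕ),
      (∀ k, (∑ j, p j * c k j) ≤ B) ∧
      (∀ k, (∑ i, x k i) = 1) ∧
      (∀ k, (∑ j, w j * c k j) = v k) ∧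
      (∀ k i, v k + x k i * W ≤ t k i + W) ∧
      (∀ k i, t k i ≤ W) ∧
      (∀ k, (∑ i : Fin m, ((i : ℕ) + 1) * t k i) = z k) ∧
      (∀ j, (∑ k, c k j) = n j) ∧
      (∀ i, (∑ k, x k i) = 1) ∧
      (∑ k, z k) ≤ T) := by
  constructor
  · rintro ⟨y, hy, hcap, hcost⟩
    have hvW k : ∑ j, w j * y k j ≤ W := hW ▸ bin_weight_le (fun j => (hp j).1) hy (hcap k)
    have hx (k i : Fin m) : (if i = k then 1 else 0) ≤ 1 := by split_ifs <;> simp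
    refine ⟨y, fun k i => if i = k then 1 else 0,
      fun k i => (if i = k then 1 else 0) * ∑ j, w j * y k j, fun k => ∑ j, w j * y k j,
      fun k => ((k : ℕ) + 1) * ∑ j, w j * y k j, hcap, by simp, fun k => rfl,
      fun k i => add_mul_le_mul_add_of_le_one (hx k i) (hvW k),
      fun k i => (mul_le_of_le_one_left (Nat.zero_le _) (hx k i)).trans (hvW k),
      by simp, hy, by simp, hcost⟩
  · rintro ⟨c, x, t, v, z, hcap, hrow, hv, hbigM, -, hz, hc, hcol, hcost⟩
    refine ⟨fun i j => ∑ k, x k i * c k j, fun j => (sum_sum_mul_of_sum_eq_one hrow _).trans (hc j),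
      fun i => ?_, ?_⟩
    · rw [sum_mul_sum_mul_comm]
      exact sum_mul_le_of_sum_eq_one (hcol i) hcap
    · have hxv k i : x k i * v k ≤ t k i :=
        mul_le_of_add_mul_le_add (le_one_of_sum_eq_one (hrow k) i) (hbigM k i)
      calc ∑ i : Fin m, ((i : ℕ) + 1) * ∑ j, w j * ∑ k, x k i * c k j
          = ∑ i : Fin m, ∑ k, ((i : ℕ) + 1) * (x k i * v k) := by
            refine sum_congr rfl fun i _ => ?_
            rw [sum_mul_sum_mul_comm, mul_sum]
            simp_rw [hv]
        _ ≤ ∑ i : Fin m, ∑ k, ((i : ℕ) + 1) * t k i :=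
            sum_le_sum fun i _ => sum_le_sum fun k _ => Nat.mul_le_mul_left _ (hxv k i)
        _ = ∑ k, z k := by rw [sum_comm]; simp_rw [hz]
        _ ≤ T := hcost

theorem mswbp_pq_representation (d m B T : ℕ) (hd : 1 ≤ d) (hm : 1 ≤ m) (hB : 1 ≤ B)
    (p : Fin d → ℕ) (hp : ∀ j, 1 ≤ p j ∧ p j ≤ B)
    (n w : Fin d → ℕ)
    (W : ℕ) (hW : W = Finset.univ.sup w * min B (∑ j, n j)) :
    (∃ y : Fin m → Fin d → ℕ,
      (∀ j, ∑ k, y k j = n j) ∧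
      (∀ k, (∑ j, p j * y k j) ≤ B) ∧
      (∑ k : Fin m, ((k : ℕ) + 1) * ∑ j, w j * y k j) ≤ T) ↔
    (∃ (c : Fin m → Fin d → ℕ) (x : Fin m → Fin m → ℕ) (t : Fin m → Fin m → ℕ)
        (v z : Fin m → ℕ),
      (∀ k, (∑ j, p j * c k j) ≤ B) ∧
      (∀ k, (∑ i, x k i) = 1) ∧
      (∀ k, (∑ j, w j * c k j) = v k) ∧
      (∀ k i, v k + x k i * W ≤ t k i + W) ∧
      (∀ k i, t k i ≤ W) ∧
      (∀ k, (∑ i : Fin m, ((i : ℕ) + 1) * t k i) = z k) ∧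
      (∀ j, (∑ k, c k j) = n j) ∧
      (∀ i, (∑ k, x k i) = 1) ∧
      (∑ k, z k) ≤ T) :=
  mswbp_pq_representation_general d m B T p hp n w W hW
end
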